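/- arXiv:2402.17284 — 10 statements merged into one kernel-verified Lean document; each statement's English description precedes it below -/
import Mathlib

section
/- Let Q be a unital quantale with unit e. Assume Q possesses a dualizing element δ and that the multiplication distributes over nonempty infima in each variable, i.e. for every nonempty A ⊆ Q and every b ∈ Q one has b * sInf A = ⨅ a ∈ A, b * a and (sInf A) * b = ⨅ a ∈ A, a * b. If the unit e is ◁-approximable, then every element α ∈ Q is ◁-approximable, i.e. α ≤ sSup {β | β ◁ α} for all α ∈ Q (so the underlying complete lattice of Q is completely distributive). -/
/-!
For a dualizing `δ`, `a ↦ a ⇨ᵣ δ` is an order-reversing bijection with inverse `a ↦ a ⇨ₗ δ`;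
since the first turns suprema into infima, the second turns infima into suprema.
Let `γ ◁ e` and `α ≤ sSup A`. The elements `(α * (a ⇨ᵣ δ)) ⇨ₗ δ`, `a ∈ A`, then have supremum
`(α * ⨅ a ∈ A, a ⇨ᵣ δ) ⇨ₗ δ = (α * (sSup A ⇨ᵣ δ)) ⇨ₗ δ`, which lies above `e` because
`α * (sSup A ⇨ᵣ δ) ≤ δ`. So `γ` lies below one of them, and multiplying by `α` on the right
gives `γ * α ≤ a`. Hence `γ * α ◁ α` whenever `γ ◁ e`, and `α = e * α ≤ ⨆ γ ◁ e, γ * α`.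
-/

def TotallyBelow {α : Type*} [CompleteLattice α] (b a : α) : Prop :=
  ∀ s : Set α, a ≤ sSup s → ∃ c ∈ s, b ≤ c

infix:50 " ◁ " => TotallyBelow

namespace Quantale

variable {α : Type*} [Semigroup α] [CompleteLattice α] [IsQuantale α]

theorem iSup_rightMulResiduation {ι : Sort*} (f : ι → α) (z : α) :
    (⨆ i, f i) ⇨ᵣ z = ⨅ i, f i ⇨ᵣ z :=
  eq_of_forall_le_iff fun w => by
    rw [le_iInf_iff, rightMulResiduation_le_iff_mul_le, iSup, sSup_mul_distrib, iSup_range,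
      iSup_le_iff]
    simp only [rightMulResiduation_le_iff_mul_le]

/-- In the notation of residuations `α ↘ β`, `β ↙ α`: `a ⇨ᵣ δ = a ↘ δ` and `a ⇨ₗ δ = δ ↙ a`. -/
def IsDualizing (δ : α) : Prop :=
  ∀ a : α, (a ⇨ᵣ δ) ⇨ₗ δ = a ∧ (a ⇨ₗ δ) ⇨ᵣ δ = a

theorem IsDualizing.iInf_leftMulResiduation {δ : α} (hδ : IsDualizing δ) {ι : Sort*}
    (f : ι → α) : (⨅ i, f i) ⇨ₗ δ = ⨆ i, f i ⇨ₗ δ := by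
  have h : (⨆ i, f i ⇨ₗ δ) ⇨ᵣ δ = ⨅ i, f i := by
    simp only [iSup_rightMulResiduation, fun i => (hδ (f i)).2]
  rw [← h, (hδ _).1]

theorem IsDualizing.totallyBelow_mul {δ e γ a : α} (hδ : IsDualizing δ)
    (hinf : ∀ s : Set α, s.Nonempty → ∀ b : α, b * sInf s = ⨅ x ∈ s, b * x)
    (he : ∀ x : α, e * x = x) (hγ : γ ◁ e) (ha : a ≠ ⊥) : γ * a ◁ a := by
  intro A hA
  have hA_ne : A.Nonempty := Set.nonempty_iff_ne_empty.2 fun h => ha (by simpa [h] using hA)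
  have hsup : sSup ((fun x => (a * (x ⇨ᵣ δ)) ⇨ₗ δ) '' A) = (a * (sSup A ⇨ᵣ δ)) ⇨ₗ δ := by
    calc sSup ((fun x => (a * (x ⇨ᵣ δ)) ⇨ₗ δ) '' A)
        = (⨅ x ∈ A, a * (x ⇨ᵣ δ)) ⇨ₗ δ := by
          simp only [sSup_image, ← hδ.iInf_leftMulResiduation]
      _ = (a * sInf ((· ⇨ᵣ δ) '' A)) ⇨ₗ δ := by rw [hinf _ (hA_ne.image _), iInf_image]
      _ = (a * (sSup A ⇨ᵣ δ)) ⇨ₗ δ := by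
          simp only [sInf_image, sSup_eq_iSup, iSup_rightMulResiduation]
  have he_le : e ≤ (a * (sSup A ⇨ᵣ δ)) ⇨ₗ δ := by
    rw [leftMulResiduation_le_iff_mul_le, he]
    calc a * (sSup A ⇨ᵣ δ) ≤ sSup A * (sSup A ⇨ᵣ δ) := mul_le_mul_left hA _
      _ ≤ δ := rightMulResiduation_le_iff_mul_le.1 le_rfl
  obtain ⟨_, ⟨x, hxA, rfl⟩, hγx⟩ := hγ _ (hsup ▸ he_le)
  refine ⟨x, hxA, ?_⟩
  rw [← (hδ x).1, leftMulResiduation_le_iff_mul_le, mul_assoc]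
  exact leftMulResiduation_le_iff_mul_le.1 hγx

theorem IsDualizing.le_sSup_totallyBelow {δ e : α} (hδ : IsDualizing δ)
    (hinf : ∀ s : Set α, s.Nonempty → ∀ b : α, b * sInf s = ⨅ x ∈ s, b * x)
    (he : ∀ x : α, e * x = x) (he_approx : e ≤ sSup {γ | γ ◁ e}) (a : α) :
    a ≤ sSup {b | b ◁ a} := by
  rcases eq_or_ne a ⊥ with rfl | ha
  · exact bot_le
  calc a = e * a := (he a).symm
    _ ≤ sSup {γ | γ ◁ e} * a := mul_le_mul_left he_approx a
    _ = ⨆ γ ∈ {γ | γ ◁ e}, γ * a := sSup_mul_distrib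
    _ ≤ sSup {b | b ◁ a} := iSup₂_le fun γ hγ => le_sSup (hδ.totallyBelow_mul hinf he hγ ha)

end Quantale

theorem stmt_0_general {Q : Type*} [CompleteLattice Q] (mul : Q → Q → Q)
    (hassoc : ∀ a b c : Q, mul (mul a b) c = mul a (mul b c))
    (hsSup_left : ∀ (A : Set Q) (b : Q), mul (sSup A) b = ⨆ a ∈ A, mul a b)
    (hsSup_right : ∀ (A : Set Q) (b : Q), mul b (sSup A) = ⨆ a ∈ A, mul b a)
    (e : Q) (he_left : ∀ a : Q, mul e a = a)
    (δ : Q)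
    (hdualizing : ∀ α : Q,
      sSup {c : Q | mul c (sSup {d : Q | mul α d ≤ δ}) ≤ δ} = α ∧
      sSup {d : Q | mul (sSup {c : Q | mul c α ≤ δ}) d ≤ δ} = α)
    (hsInf_right : ∀ (A : Set Q), A.Nonempty → ∀ b : Q,
      mul b (sInf A) = ⨅ a ∈ A, mul b a)
    (he_approx : e ≤ sSup {β : Q | ∀ A : Set Q, e ≤ sSup A → ∃ c ∈ A, β ≤ c}) :
    ∀ α : Q, α ≤ sSup {β : Q | ∀ A : Set Q, α ≤ sSup A → ∃ c ∈ A, β ≤ c} := by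
  let _ : Semigroup Q := { mul := mul, mul_assoc := hassoc }
  have : IsQuantale Q := ⟨fun x s => hsSup_right s x, hsSup_left⟩
  exact Quantale.IsDualizing.le_sSup_totallyBelow hdualizing hsInf_right he_left he_approx

/-- In a unital quantale with a dualizing element whose multiplication
distributes over nonempty infima, ◁-approximability of the unit implies every element
is ◁-approximable (complete distributivity of the underlying lattice). -/
theorem stmt_0 {Q : Type*} [CompleteLattice Q] (mul : Q → Q → Q)
    (hassoc : ∀ a b c : Q, mul (mul a b) c = mul a (mul b c))
    (hsSup_left : ∀ (A : Set Q) (b : Q), mul (sSup A) b = ⨆ a ∈ A, mul a b)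
    (hsSup_right : ∀ (A : Set Q) (b : Q), mul b (sSup A) = ⨆ a ∈ A, mul b a)
    (e : Q) (he_left : ∀ a : Q, mul e a = a) (he_right : ∀ a : Q, mul a e = a)
    (δ : Q)
    (hdualizing : ∀ α : Q,
      sSup {c : Q | mul c (sSup {d : Q | mul α d ≤ δ}) ≤ δ} = α ∧
      sSup {d : Q | mul (sSup {c : Q | mul c α ≤ δ}) d ≤ δ} = α)
    (hsInf_right : ∀ (A : Set Q), A.Nonempty → ∀ b : Q,
      mul b (sInf A) = ⨅ a ∈ A, mul b a)
    (hsInf_left : ∀ (A : Set Q), A.Nonempty → ∀ b : Q,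
      mul (sInf A) b = ⨅ a ∈ A, mul a b)
    (he_approx : e ≤ sSup {β : Q | ∀ A : Set Q, e ≤ sSup A → ∃ c ∈ A, β ≤ c}) :
    ∀ α : Q, α ≤ sSup {β : Q | ∀ A : Set Q, α ≤ sSup A → ∃ c ∈ A, β ≤ c} :=
  stmt_0_general mul hassoc hsSup_left hsSup_right e he_left δ hdualizing hsInf_right he_approx
end

section
/- Let L be a complete lattice and γ ∈ L. Then there exist a complete lattice M, a map ι : L → M which is injective, preserves arbitrary suprema (ι (sSup A) = ⨆ a ∈ A, ι a for all A ⊆ L) and preserves nonempty infima, and elements x, t ∈ M with x ≠ t, x ∉ range ι, t ∉ range ι, such that: (i) every element of M lies in range ι ∪ {x, t}; (ii) t is the top element ⊤ of M; (iii) {m ∈ M | m ≤ x} \ {x} = {m ∈ M | m ≤ ι γ} and {m ∈ M | x ≤ m} \ {x} = {t}. Moreover x is completely join-prime in M (for every A ⊆ M with x ≤ sSup A there is a ∈ A with x ≤ a); if γ ≠ ⊤_L then ι(⊤_L) and x are incomparable; and if α, β ∈ L satisfy γ ⊓ (α ⊔ β) ≰ (γ ⊓ α) ⊔ (γ ⊓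 β), then x ⊓ (ι α ⊔ ι β) ≰ (x ⊓ ι α) ⊔ (x ⊓ ι β) and x ≰ ι α ⊔ ι β (so M is strictly nondistributive). -/
/-!
The new lattice is carved out of `L × Prop × Prop` by a condition preserved under arbitrary
infima, so it is a complete lattice with coordinatewise order and infima. Reading off the first
coordinate is right adjoint to `ι`, whence `ι` preserves suprema. The isolated element `x` is
completely join-prime because a family of elements not above `x` has second coordinate `False`
throughout, so its supremum stays in the image of `ι`, which contains nothing above `x`.
-/

universe u

/-- `a ∈ L` becomes `(a, False, False)`, the isolated element is `(γ, True, False)` and the new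
top is `(⊤, True, True)`. -/
def IsolatedExtension.Valid {L : Type u} [CompleteLattice L] (γ : L) (m : L × Prop × Prop) :
    Prop :=
  (m.2.2 → m.2.1) ∧ (m.2.1 → ¬ m.2.2 → m.1 = γ) ∧ (m.2.2 → m.1 = ⊤)

def IsolatedExtension {L : Type u} [CompleteLattice L] (γ : L) : Type u :=
  {m : L × Prop × Prop // IsolatedExtension.Valid γ m}

namespace IsolatedExtension

variable {L : Type u} [CompleteLattice L] {γ : L}

lemma Valid.le_fst {m : L × Prop × Prop} (hm : Valid γ m) (hp : m.2.1) : γ ≤ m.1 := by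
  by_cases hq : m.2.2
  · simp [hm.2.2 hq]
  · exact (hm.2.1 hp hq).ge

lemma valid_sInf {s : Set (L × Prop × Prop)} (hs : ∀ m ∈ s, Valid γ m) : Valid γ (sInf s) := by
  have hfst : (sInf s).1 = ⨅ m ∈ s, m.1 := by rw [Prod.fst_sInf, sInf_image]
  have hp : (sInf s).2.1 ↔ ∀ m ∈ s, m.2.1 := by
    rw [Prod.snd_sInf, Prod.fst_sInf, Set.image_image, sInf_image]; simp
  have hq : (sInf s).2.2 ↔ ∀ m ∈ s, m.2.2 := by
    rw [Prod.snd_sInf, Prod.snd_sInf, Set.image_image, sInf_image]; simp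
  refine ⟨fun h => hp.2 fun m hm => (hs m hm).1 (hq.1 h m hm), fun h1 h2 => ?_, fun h => ?_⟩
  · obtain ⟨m₀, hm₀, hq₀⟩ : ∃ m ∈ s, ¬ m.2.2 := by simpa [hq] using h2
    rw [hfst]
    exact le_antisymm ((iInf₂_le m₀ hm₀).trans ((hs m₀ hm₀).2.1 (hp.1 h1 m₀ hm₀) hq₀).le)
      (le_iInf₂ fun m hm => (hs m hm).le_fst (hp.1 h1 m hm))
  · rw [hfst]
    exact iInf₂_eq_top.2 fun m hm => (hs m hm).2.2 (hq.1 h m hm)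

instance : PartialOrder (IsolatedExtension γ) := Subtype.partialOrder _

noncomputable instance : InfSet (IsolatedExtension γ) :=
  ⟨fun A => ⟨sInf (Subtype.val '' A), valid_sInf (by rintro _ ⟨m, -, rfl⟩; exact m.2)⟩⟩

noncomputable instance : CompleteLattice (IsolatedExtension γ) :=
  completeLatticeOfInf _ fun _ => IsGLB.of_image Subtype.coe_le_coe (isGLB_sInf _)

lemma val_top : (⊤ : IsolatedExtension γ).1 = ⊤ := by
  show sInf (Subtype.val '' ∅) = ⊤
  rw [Set.image_empty, sInf_empty]

variable (γ) in
def embed (a : L) : IsolatedExtension γ :=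
  ⟨(a, False, False), False.elim, fun h => h.elim, False.elim⟩

variable (γ) in
def isolated : IsolatedExtension γ :=
  ⟨(γ, True, False), False.elim, fun _ _ => rfl, False.elim⟩

lemma gc_embed : GaloisConnection (embed γ) (fun m => m.1.1) :=
  fun _ _ => ⟨And.left, fun h => ⟨h, False.elim, False.elim⟩⟩

lemma le_embed_iff {m : IsolatedExtension γ} {a : L} : m ≤ embed γ a ↔ m.1.1 ≤ a ∧ ¬ m.1.2.1 :=
  ⟨fun h => ⟨h.1, h.2.1⟩, fun h => ⟨h.1, h.2, fun hq => h.2 (m.2.1 hq)⟩⟩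

lemma isolated_le_iff {m : IsolatedExtension γ} : isolated γ ≤ m ↔ m.1.2.1 :=
  ⟨fun h => h.2.1 trivial, fun h => ⟨m.2.le_fst h, fun _ => h, False.elim⟩⟩

@[simp]
lemma embed_le_embed {a b : L} : embed γ a ≤ embed γ b ↔ a ≤ b := gc_embed _ _

@[simp]
lemma embed_le_isolated {a : L} : embed γ a ≤ isolated γ ↔ a ≤ γ := gc_embed _ _

@[simp]
lemma not_isolated_le_embed (a : L) : ¬ isolated γ ≤ embed γ a :=
  fun h => (le_embed_iff.1 h).2 trivial

lemma not_top_le_embed (a : L) : ¬ (⊤ : IsolatedExtension γ) ≤ embed γ a :=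
  fun h => (le_embed_iff.1 h).2 (by rw [val_top]; trivial)

lemma not_top_le_isolated : ¬ (⊤ : IsolatedExtension γ) ≤ isolated γ :=
  fun h => h.2.2 (by rw [val_top]; trivial)

@[simp]
lemma isolated_ne_top : isolated γ ≠ ⊤ :=
  fun h => not_top_le_isolated h.ge

@[simp]
lemma embed_ne_isolated (a : L) : embed γ a ≠ isolated γ :=
  fun h => not_isolated_le_embed a h.ge

@[simp]
lemma embed_ne_top (a : L) : embed γ a ≠ ⊤ :=
  fun h => not_top_le_embed a h.ge

lemma embed_injective : Function.Injective (embed γ) :=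
  fun _ _ h => congrArg (fun m => m.1.1) h

lemma embed_sInf {A : Set L} (hA : A.Nonempty) : embed γ (sInf A) = ⨅ a ∈ A, embed γ a := by
  refine le_antisymm (le_iInf₂ fun a ha => gc_embed.monotone_l (sInf_le ha)) ?_
  obtain ⟨a₀, ha₀⟩ := hA
  refine le_embed_iff.2 ⟨le_sInf fun a ha => ?_, (le_embed_iff.1 (iInf₂_le a₀ ha₀)).2⟩
  exact (le_embed_iff.1 (iInf₂_le a ha)).1

lemma isolated_inf_embed (a : L) : isolated γ ⊓ embed γ a = embed γ (γ ⊓ a) := by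
  refine le_antisymm ?_ (le_inf (embed_le_isolated.2 inf_le_left) (embed_le_embed.2 inf_le_right))
  obtain ⟨ha, hp⟩ := le_embed_iff.1 (inf_le_right : isolated γ ⊓ embed γ a ≤ _)
  exact le_embed_iff.2 ⟨le_inf (inf_le_left : isolated γ ⊓ embed γ a ≤ _).1 ha, hp⟩

lemma eq_embed_or_eq_isolated_or_eq_top (m : IsolatedExtension γ) :
    m ∈ Set.range (embed γ) ∨ m = isolated γ ∨ m = ⊤ := by
  obtain ⟨⟨a, p, q⟩, hqp, hγ, htop⟩ := m
  by_cases hq : q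
  · refine .inr (.inr (Subtype.ext ?_))
    rw [val_top]
    exact Prod.ext (htop hq) (Prod.ext (eq_true (hqp hq)) (eq_true hq))
  by_cases hp : p
  · exact .inr (.inl (Subtype.ext (Prod.ext (hγ hp hq) (Prod.ext (eq_true hp) (eq_false hq)))))
  · exact .inl ⟨a, Subtype.ext (Prod.ext rfl (Prod.ext (eq_false hp).symm (eq_false hq).symm))⟩

lemma exists_isolated_le_of_isolated_le_sSup {A : Set (IsolatedExtension γ)}
    (h : isolated γ ≤ sSup A) : ∃ m ∈ A, isolated γ ≤ m := by
  by_contra! hA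
  refine not_isolated_le_embed (⨆ m ∈ A, m.1.1) (h.trans (sSup_le fun m hm => ?_))
  exact le_embed_iff.2
    ⟨le_iSup₂ (f := fun m _ => m.1.1) m hm, fun hp => hA m hm (isolated_le_iff.2 hp)⟩

end IsolatedExtension

open IsolatedExtension

/-- Every complete lattice `L` with a chosen element `γ` has an extension
`M` (by an isolated element `x` over `γ` together with a new top `t`); `x` is completely
join-prime, `ι ⊤` and `x` are incomparable when `γ ≠ ⊤`, and any nondistributivity
witness `(α, β, γ)` in `L` yields a strict-nondistributivity witness `(ι α, ι β, x)`
in `M`. -/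
theorem stmt_1 {L : Type u} [CompleteLattice L] (γ : L) :
    ∃ (M : Type u) (_ : CompleteLattice M) (ι : L → M) (x t : M),
      Function.Injective ι ∧
      (∀ A : Set L, ι (sSup A) = ⨆ a ∈ A, ι a) ∧
      (∀ A : Set L, A.Nonempty → ι (sInf A) = ⨅ a ∈ A, ι a) ∧
      x ≠ t ∧ x ∉ Set.range ι ∧ t ∉ Set.range ι ∧
      (∀ m : M, m ∈ Set.range ι ∨ m = x ∨ m = t) ∧
      t = ⊤ ∧
      ({m : M | m ≤ x} \ {x} = {m : M | m ≤ ι γ}) ∧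
      ({m : M | x ≤ m} \ {x} = {t}) ∧
      (∀ A : Set M, x ≤ sSup A → ∃ a ∈ A, x ≤ a) ∧
      (γ ≠ ⊤ → ¬ ι ⊤ ≤ x ∧ ¬ x ≤ ι ⊤) ∧
      (∀ α β : L, ¬ γ ⊓ (α ⊔ β) ≤ (γ ⊓ α) ⊔ (γ ⊓ β) →
        (¬ x ⊓ (ι α ⊔ ι β) ≤ (x ⊓ ι α) ⊔ (x ⊓ ι β)) ∧ ¬ x ≤ ι α ⊔ ι β) := by
  refine ⟨IsolatedExtension γ, inferInstance, embed γ, isolated γ, ⊤, embed_injective,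
    fun _ => gc_embed.l_sSup, fun _ => embed_sInf, isolated_ne_top,
    fun ⟨a, h⟩ => embed_ne_isolated a h, fun ⟨a, h⟩ => embed_ne_top a h,
    eq_embed_or_eq_isolated_or_eq_top, rfl, ?_, ?_,
    fun _ => exists_isolated_le_of_isolated_le_sSup,
    fun hγ => ⟨fun h => hγ (top_le_iff.1 (embed_le_isolated.1 h)), not_isolated_le_embed ⊤⟩,
    fun α β h => ?_⟩
  · ext m
    rcases eq_embed_or_eq_isolated_or_eq_top m with ⟨b, rfl⟩ | rfl | rfl <;>
      simp [isolated_ne_top.symm]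
  · ext m
    rcases eq_embed_or_eq_isolated_or_eq_top m with ⟨b, rfl⟩ | rfl | rfl <;>
      simp [isolated_ne_top.symm]
  · rw [← gc_embed.l_sup, isolated_inf_embed, isolated_inf_embed, isolated_inf_embed,
      ← gc_embed.l_sup, embed_le_embed]
    exact ⟨h, not_isolated_le_embed _⟩
end

section
/- Every complete lattice that is strictly nondistributive has at least 7 elements: there is an injective map from Fin 7 into L. -/
/-!
Put `j = (x ⊓ α) ⊔ (x ⊓ β)`, `m = x ⊓ (α ⊔ β)`, `s = α ⊔ β` and `u = x ⊔ s`. The hypotheses say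
`j < m` and `x ≰ s`, so `j < m < x < u` and `m < s < u` with `x` and `s` incomparable. Not both
`α` and `β` lie below `x` (otherwise `m ≤ s ≤ j`), say `α ≰ x`; then `α` is a sixth element, strictly
below `s` (if `s = α` then `m = x ⊓ α ≤ j`). The seventh is `β` if `β ≰ x`, and `x ⊓ α`, which lies
strictly below `j`, if `β ≤ x`.
-/

theorem exists_injective_fin_seven_of_not_le {L : Type*} [Lattice L] {α β x : L}
    (hdist : ¬ x ⊓ (α ⊔ β) ≤ (x ⊓ α) ⊔ (x ⊓ β)) (hx : ¬ x ≤ α ⊔ β) (hα : ¬ α ≤ x) :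
    ∃ f : Fin 7 → L, Function.Injective f := by
  suffices ∃ y, [(x ⊓ α) ⊔ (x ⊓ β), x ⊓ (α ⊔ β), x, α ⊔ β, x ⊔ (α ⊔ β), α, y].Nodup by
    obtain ⟨y, hy⟩ := this
    exact ⟨_, List.nodup_iff_injective_get.mp hy⟩
  classical
  refine if hβ : β ≤ x then ⟨x ⊓ α, ?_⟩ else ⟨β, ?_⟩ <;>
  · simp only [List.nodup_cons, List.mem_cons, List.not_mem_nil, List.nodup_nil, not_or,
      not_false_eq_true, and_true]
    and_intros <;> order

/-- Every strictly nondistributive complete lattice has at least 7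
elements: there is an injective map from `Fin 7` into it. -/
theorem stmt_4 {L : Type*} [CompleteLattice L]
    (h : ∃ α β x : L, ¬ x ⊓ (α ⊔ β) ≤ (x ⊓ α) ⊔ (x ⊓ β) ∧ ¬ x ≤ α ⊔ β) :
    ∃ f : Fin 7 → L, Function.Injective f := by
  obtain ⟨α, β, x, hdist, hx⟩ := h
  by_cases hα : α ≤ x
  · have hβ : ¬ β ≤ x := fun hβ ↦ hdist (by order)
    rw [sup_comm α β, sup_comm (x ⊓ α)] at hdist
    rw [sup_comm α β] at hx
    exact exists_injective_fin_seven_of_not_le hdist hx hβ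
  · exact exists_injective_fin_seven_of_not_le hdist hx hα
end

section
/- Every finite lattice with exactly 7 elements that is strictly nondistributive is order-isomorphic to N̄5 (the extended pentagon) or to M̄3 (the extended diamond). -/
/-- The order relation of the extended pentagon `N̄5`:
indices 0 = ⊥, 1 = α, 2 = β, 3 = γ, 4 = ⊤ (= α⊔β = γ⊔β), 5 = x, 6 = ⊤̄,
where ⊥ < α < γ < ⊤ < ⊤̄, β only below ⊤ and ⊤̄, and x is the isolated element
with x⁻ = γ and x⁺ = ⊤̄. -/
def relN5bar (i j : Fin 7) : Prop :=
  ((i : ℕ), (j : ℕ)) ∈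
    ([(0,0),(0,1),(0,2),(0,3),(0,4),(0,5),(0,6),
      (1,1),(1,3),(1,4),(1,5),(1,6),
      (2,2),(2,4),(2,6),
      (3,3),(3,4),(3,5),(3,6),
      (4,4),(4,6),
      (5,5),(5,6),
      (6,6)] : List (ℕ × ℕ))

/-- The order relation of the extended diamond `M̄3`:
indices 0 = ⊥, 1 = α, 2 = β, 3 = γ, 4 = ⊤, 5 = x, 6 = ⊤̄,
where α, β, γ are the three atoms of the diamond and x is the isolated element
with x⁻ = γ and x⁺ = ⊤̄. -/
def relM3bar (i j : Fin 7) : Prop :=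
  ((i : ℕ), (j : ℕ)) ∈
    ([(0,0),(0,1),(0,2),(0,3),(0,4),(0,5),(0,6),
      (1,1),(1,4),(1,6),
      (2,2),(2,4),(2,6),
      (3,3),(3,4),(3,5),(3,6),
      (4,4),(4,6),
      (5,5),(5,6),
      (6,6)] : List (ℕ × ℕ))


/-!
Given `α, β, x` witnessing strict nondistributivity, put `⊤ = α ⊔ β`, `γ = x ⊓ ⊤`,
`⊤̄ = x ⊔ ⊤` and `⊥ = x ⊓ α ⊓ β`. After swapping `α` and `β` if necessary we may assume
`β ≰ γ`; then the two defining inequalities alone determine the order among these seven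
elements: it is that of `N̄5` if `α ≤ γ` and that of `M̄3` otherwise. In particular the seven
elements are distinct, so they exhaust `L`.
-/

instance : Std.Antisymm relN5bar := ⟨by unfold relN5bar; decide⟩

instance : Std.Antisymm relM3bar := ⟨by unfold relM3bar; decide⟩

theorem Function.bijective_of_le_iff {ι α : Type*} [Fintype ι] [Fintype α] [PartialOrder α]
    {r : ι → ι → Prop} [Std.Antisymm r] {f : ι → α} (hcard : Fintype.card ι = Fintype.card α)
    (hf : ∀ i j, f i ≤ f j ↔ r i j) : Function.Bijective f :=
  (Fintype.bijective_iff_injective_and_card f).2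
    ⟨fun i j hij => antisymm ((hf i j).1 hij.le) ((hf j i).1 hij.ge), hcard⟩

section Lattice

variable {L : Type*} [Lattice L] {a b x : L}

/-- Indexed as in `relN5bar` and `relM3bar`: `⊥, α, β, γ, ⊤, x, ⊤̄`. -/
def nondistribFrame (a b x : L) : Fin 7 → L :=
  ![x ⊓ a ⊓ b, a, b, x ⊓ (a ⊔ b), a ⊔ b, x, x ⊔ (a ⊔ b)]

theorem nondistribFrame_le_iff_relN5bar (hy : ¬ x ⊓ (a ⊔ b) ≤ (x ⊓ a) ⊔ (x ⊓ b))
    (hx : ¬ x ≤ a ⊔ b) (hb : ¬ b ≤ x ⊓ (a ⊔ b)) (ha : a ≤ x ⊓ (a ⊔ b)) (i j : Fin 7) :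
    nondistribFrame a b x i ≤ nondistribFrame a b x j ↔ relN5bar i j := by
  fin_cases i <;> fin_cases j <;> simp +decide only [relN5bar, iff_true, iff_false] <;>
    simp only [nondistribFrame, Fin.zero_eta, Fin.mk_one, Fin.reduceFinMk, Matrix.cons_val] <;>
    order

theorem nondistribFrame_le_iff_relM3bar (hy : ¬ x ⊓ (a ⊔ b) ≤ (x ⊓ a) ⊔ (x ⊓ b))
    (hx : ¬ x ≤ a ⊔ b) (hb : ¬ b ≤ x ⊓ (a ⊔ b)) (ha : ¬ a ≤ x ⊓ (a ⊔ b)) (i j : Fin 7) :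
    nondistribFrame a b x i ≤ nondistribFrame a b x j ↔ relM3bar i j := by
  fin_cases i <;> fin_cases j <;> simp +decide only [relM3bar, iff_true, iff_false] <;>
    simp only [nondistribFrame, Fin.zero_eta, Fin.mk_one, Fin.reduceFinMk, Matrix.cons_val] <;>
    order

theorem exists_relN5bar_or_relM3bar [Fintype L] (hcard : Fintype.card L = 7)
    (hy : ¬ x ⊓ (a ⊔ b) ≤ (x ⊓ a) ⊔ (x ⊓ b)) (hx : ¬ x ≤ a ⊔ b) (hb : ¬ b ≤ x ⊓ (a ⊔ b)) :
    (∃ f : Fin 7 → L, Function.Bijective f ∧ ∀ i j, f i ≤ f j ↔ relN5bar i j) ∨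
    (∃ f : Fin 7 → L, Function.Bijective f ∧ ∀ i j, f i ≤ f j ↔ relM3bar i j) := by
  have hcard' : Fintype.card (Fin 7) = Fintype.card L := by simp [hcard]
  by_cases ha : a ≤ x ⊓ (a ⊔ b)
  · have hf := nondistribFrame_le_iff_relN5bar hy hx hb ha
    exact Or.inl ⟨_, Function.bijective_of_le_iff hcard' hf, hf⟩
  · have hf := nondistribFrame_le_iff_relM3bar hy hx hb ha
    exact Or.inr ⟨_, Function.bijective_of_le_iff hcard' hf, hf⟩

end Lattice

/-- Every finite lattice with exactly 7 elements that is strictly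
nondistributive is order-isomorphic to the extended pentagon `N̄5` or to the
extended diamond `M̄3`. -/
theorem stmt_5 {L : Type*} [Lattice L] [Fintype L] (hcard : Fintype.card L = 7)
    (h : ∃ α β x : L, ¬ x ⊓ (α ⊔ β) ≤ (x ⊓ α) ⊔ (x ⊓ β) ∧ ¬ x ≤ α ⊔ β) :
    (∃ f : Fin 7 → L, Function.Bijective f ∧ ∀ i j, f i ≤ f j ↔ relN5bar i j) ∨
    (∃ f : Fin 7 → L, Function.Bijective f ∧ ∀ i j, f i ≤ f j ↔ relM3bar i j) := by
  obtain ⟨a, b, x, hy, hx⟩ := h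
  by_cases hb : b ≤ x ⊓ (a ⊔ b)
  · -- `a` and `b` cannot both lie below `x`, else `x ⊓ (a ⊔ b) = a ⊔ b = (x ⊓ a) ⊔ (x ⊓ b)`
    have ha : ¬ a ≤ x ⊓ (b ⊔ a) := fun ha => hy (by order)
    rw [sup_comm a b, sup_comm (x ⊓ a)] at hy
    rw [sup_comm a b] at hx
    exact exists_relN5bar_or_relM3bar hcard hy hx ha
  · exact exists_relN5bar_or_relM3bar hcard hy hx hb
end

section
/- Let Q be a unital quantale with unit e and let γ ∈ Q be such that {m ∈ Q | m ≤ e} \ {e} = {m ∈ Q | m ≤ γ} and {m ∈ Q | e ≤ m} \ {e} = {⊤}. Then: (1) γ * α ⊔ α * γ ≤ α for every α ∈ Q; and (2) for every α ∈ Q and every β ∈ Q with β ≠ e and β ≰ γ, one has ⊤ * α = (β * α) ⊔ α and α * ⊤ = (α * β) ⊔ α. -/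
section Distributivity

variable {Q : Type*} (mul : Q → Q → Q)

theorem sup_mul_of_sSup_mul [CompleteLattice Q]
    (h : ∀ (A : Set Q) (b : Q), mul (sSup A) b = ⨆ a ∈ A, mul a b) (a b c : Q) :
    mul (a ⊔ b) c = mul a c ⊔ mul b c := by
  simpa only [sSup_pair, iSup_pair] using h {a, b} c

theorem mul_sup_of_mul_sSup [CompleteLattice Q]
    (h : ∀ (A : Set Q) (b : Q), mul b (sSup A) = ⨆ a ∈ A, mul b a) (a b c : Q) :
    mul c (a ⊔ b) = mul c a ⊔ mul c b := by
  simpa only [sSup_pair, iSup_pair] using h {a, b} c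

theorem mul_le_mul_right_of_sup_mul [SemilatticeSup Q]
    (h : ∀ a b c : Q, mul (a ⊔ b) c = mul a c ⊔ mul b c) {a b : Q} (hab : a ≤ b) (c : Q) :
    mul a c ≤ mul b c := by
  calc mul a c ≤ mul a c ⊔ mul b c := le_sup_left
    _ = mul b c := by rw [← h, sup_eq_right.mpr hab]

theorem mul_le_mul_left_of_mul_sup [SemilatticeSup Q]
    (h : ∀ a b c : Q, mul c (a ⊔ b) = mul c a ⊔ mul c b) {a b : Q} (hab : a ≤ b) (c : Q) :
    mul c a ≤ mul c b := by
  calc mul c a ≤ mul c a ⊔ mul c b := le_sup_left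
    _ = mul c b := by rw [← h, sup_eq_right.mpr hab]

end Distributivity

theorem sup_eq_top_of_Iio_eq_Iic_of_Ioi_eq {Q : Type*} [SemilatticeSup Q] [OrderTop Q]
    {e γ β : Q} (hdown : Set.Iio e = Set.Iic γ) (hup : Set.Ioi e = {⊤})
    (hβe : β ≠ e) (hβγ : ¬β ≤ γ) : β ⊔ e = ⊤ := by
  have hβ_not_lt : ¬β < e := fun hlt => hβγ (hdown ▸ hlt : β ∈ Set.Iic γ)
  have he_lt : e < β ⊔ e :=
    lt_of_le_of_ne le_sup_right fun heq => hβ_not_lt (lt_of_le_of_ne (heq ▸ le_sup_left) hβe)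
  exact (hup ▸ he_lt : β ⊔ e ∈ ({⊤} : Set Q))

theorem stmt_8_general {Q : Type*} [CompleteLattice Q] (mul : Q → Q → Q)
    (hsSup_left : ∀ (A : Set Q) (b : Q), mul (sSup A) b = ⨆ a ∈ A, mul a b)
    (hsSup_right : ∀ (A : Set Q) (b : Q), mul b (sSup A) = ⨆ a ∈ A, mul b a)
    (e : Q) (he_left : ∀ a : Q, mul e a = a) (he_right : ∀ a : Q, mul a e = a)
    (γ : Q)
    (hdown : {m : Q | m ≤ e} \ {e} = {m : Q | m ≤ γ})
    (hup : {m : Q | e ≤ m} \ {e} = {(⊤ : Q)}) :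
    (∀ α : Q, mul γ α ⊔ mul α γ ≤ α) ∧
    (∀ α β : Q, β ≠ e → ¬ β ≤ γ →
      mul ⊤ α = mul β α ⊔ α ∧ mul α ⊤ = mul α β ⊔ α) := by
  have hsup_mul := sup_mul_of_sSup_mul mul hsSup_left
  have hmul_sup := mul_sup_of_mul_sSup mul hsSup_right
  have hIio : Set.Iio e = Set.Iic γ := by rwa [← Set.Iic_sdiff_right]
  have hIoi : Set.Ioi e = {⊤} := by rwa [← Set.Ici_sdiff_left]
  have hγe : γ ≤ e := (hIio ▸ Set.self_mem_Iic : γ ∈ Set.Iio e).le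
  refine ⟨fun α => sup_le ?_ ?_, fun α β hβe hβγ => ?_⟩
  · calc mul γ α ≤ mul e α := mul_le_mul_right_of_sup_mul mul hsup_mul hγe α
      _ = α := he_left α
  · calc mul α γ ≤ mul α e := mul_le_mul_left_of_mul_sup mul hmul_sup hγe α
      _ = α := he_right α
  · have htop := sup_eq_top_of_Iio_eq_Iic_of_Ioi_eq hIio hIoi hβe hβγ
    exact ⟨by rw [← htop, hsup_mul, he_left], by rw [← htop, hmul_sup, he_right]⟩

/-- In a unital quantale whose unit `e` is isolated with `e⁻ = γ` and
`e⁺ = ⊤`, one has (1) `γ * α ⊔ α * γ ≤ α` for every `α`, and (2) for every `α` and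
every `β ≠ e` with `β ≰ γ`, `⊤ * α = (β * α) ⊔ α` and `α * ⊤ = (α * β) ⊔ α`. -/
theorem stmt_8 {Q : Type*} [CompleteLattice Q] (mul : Q → Q → Q)
    (hassoc : ∀ a b c : Q, mul (mul a b) c = mul a (mul b c))
    (hsSup_left : ∀ (A : Set Q) (b : Q), mul (sSup A) b = ⨆ a ∈ A, mul a b)
    (hsSup_right : ∀ (A : Set Q) (b : Q), mul b (sSup A) = ⨆ a ∈ A, mul b a)
    (e : Q) (he_left : ∀ a : Q, mul e a = a) (he_right : ∀ a : Q, mul a e = a)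
    (γ : Q)
    (hdown : {m : Q | m ≤ e} \ {e} = {m : Q | m ≤ γ})
    (hup : {m : Q | e ≤ m} \ {e} = {(⊤ : Q)}) :
    (∀ α : Q, mul γ α ⊔ mul α γ ≤ α) ∧
    (∀ α β : Q, β ≠ e → ¬ β ≤ γ →
      mul ⊤ α = mul β α ⊔ α ∧ mul α ⊤ = mul α β ⊔ α) :=
  stmt_8_general mul hsSup_left hsSup_right e he_left he_right γ hdown hup
end

section
/- Let Q be a unital quantale with unit e and let γ ∈ Q be such that {m ∈ Q | m ≤ e} \ {e} = {m ∈ Q | m ≤ γ} and {m ∈ Q | e ≤ m} \ {e} = {⊤}. If ⨅ {β ⊔ γ | β ∈ Q, β ≠ e, β ≠ ⊤, β ≰ γ} ≤ γ, then ⊤ * γ ≤ γ and γ * ⊤ ≤ γ (γ is two-sided). -/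
/-!
If `β ≠ e` and `β ≰ γ`, then `β ≰ e` (everything strictly below `e` is below `γ`), so `e ⊔ β` lies
strictly above `e` and hence equals `⊤`. As `γ ≤ e`, distributivity gives
`⊤ * γ = (e ⊔ β) * γ = γ ⊔ β * γ ≤ γ ⊔ β * e = β ⊔ γ`, so `⊤ * γ` is a lower bound of the set
whose infimum lies below `γ`. Reversing the multiplication gives `γ * ⊤ ≤ γ`.
-/

theorem map_sup_of_map_sSup {α β : Type*} [CompleteLattice α] [CompleteLattice β] {f : α → β}
    (hf : ∀ A : Set α, f (sSup A) = ⨆ a ∈ A, f a) (x y : α) : f (x ⊔ y) = f x ⊔ f y := by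
  rw [← sSup_pair, hf, iSup_pair]

theorem monotone_of_map_sSup {α β : Type*} [CompleteLattice α] [CompleteLattice β] {f : α → β}
    (hf : ∀ A : Set α, f (sSup A) = ⨆ a ∈ A, f a) : Monotone f := fun x y hxy =>
  calc f x ≤ f x ⊔ f y := le_sup_left
    _ = f y := by rw [← map_sup_of_map_sSup hf, sup_eq_right.2 hxy]

theorem sup_eq_top_of_ne_of_not_le {L : Type*} [Lattice L] [OrderTop L] {e γ β : L}
    (hdown : ∀ m, m < e → m ≤ γ) (hup : ∀ m, e < m → m = ⊤) (hβe : β ≠ e) (hβγ : ¬β ≤ γ) :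
    e ⊔ β = ⊤ :=
  hup _ (left_lt_sup.2 fun hβ => hβγ (hdown β (lt_of_le_of_ne hβ hβe)))

theorem top_mul_le_sup_of_not_le {L : Type*} [Lattice L] [OrderTop L] (mul : L → L → L)
    (hsup_left : ∀ a b c, mul (a ⊔ b) c = mul a c ⊔ mul b c) (hmono_right : ∀ a, Monotone (mul a))
    {e : L} (he_left : ∀ a, mul e a = a) (he_right : ∀ a, mul a e = a)
    {γ : L} (hγe : γ ≤ e) (hdown : ∀ m, m < e → m ≤ γ) (hup : ∀ m, e < m → m = ⊤)
    {β : L} (hβe : β ≠ e) (hβγ : ¬β ≤ γ) : mul ⊤ γ ≤ β ⊔ γ :=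
  calc mul ⊤ γ = mul (e ⊔ β) γ := by rw [sup_eq_top_of_ne_of_not_le hdown hup hβe hβγ]
    _ = γ ⊔ mul β γ := by rw [hsup_left, he_left]
    _ ≤ γ ⊔ β := sup_le_sup_left ((hmono_right β hγe).trans_eq (he_right β)) γ
    _ = β ⊔ γ := sup_comm γ β

theorem top_mul_le_of_sInf_le {Q : Type*} [CompleteLattice Q] (mul : Q → Q → Q)
    (hsup_left : ∀ a b c, mul (a ⊔ b) c = mul a c ⊔ mul b c) (hmono_right : ∀ a, Monotone (mul a))
    {e : Q} (he_left : ∀ a, mul e a = a) (he_right : ∀ a, mul a e = a)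
    {γ : Q} (hγe : γ ≤ e) (hdown : ∀ m, m < e → m ≤ γ) (hup : ∀ m, e < m → m = ⊤)
    (hinf : sInf {z : Q | ∃ β : Q, β ≠ e ∧ β ≠ ⊤ ∧ ¬ β ≤ γ ∧ z = β ⊔ γ} ≤ γ) :
    mul ⊤ γ ≤ γ := by
  refine le_trans (le_sInf ?_) hinf
  rintro _ ⟨β, hβe, -, hβγ, rfl⟩
  exact top_mul_le_sup_of_not_le mul hsup_left hmono_right he_left he_right hγe hdown hup hβe hβγ

theorem stmt_9_general {Q : Type*} [CompleteLattice Q] (mul : Q → Q → Q)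
    (hsSup_left : ∀ (A : Set Q) (b : Q), mul (sSup A) b = ⨆ a ∈ A, mul a b)
    (hsSup_right : ∀ (A : Set Q) (b : Q), mul b (sSup A) = ⨆ a ∈ A, mul b a)
    (e : Q) (he_left : ∀ a : Q, mul e a = a) (he_right : ∀ a : Q, mul a e = a)
    (γ : Q)
    (hdown : {m : Q | m ≤ e} \ {e} = {m : Q | m ≤ γ})
    (hup : {m : Q | e ≤ m} \ {e} = {(⊤ : Q)})
    (hinf : sInf {z : Q | ∃ β : Q, β ≠ e ∧ β ≠ ⊤ ∧ ¬ β ≤ γ ∧ z = β ⊔ γ} ≤ γ) :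
    mul ⊤ γ ≤ γ ∧ mul γ ⊤ ≤ γ := by
  have hlt_iff : ∀ m, m < e ↔ m ≤ γ := fun m => by
    simpa only [lt_iff_le_and_ne, Set.mem_sdiff, Set.mem_ofPred_eq, Set.mem_singleton_iff] using
      Set.ext_iff.1 hdown m
  have hγe : γ ≤ e := ((hlt_iff γ).2 le_rfl).le
  have hdown' : ∀ m, m < e → m ≤ γ := fun m => (hlt_iff m).1
  have hup' : ∀ m, e < m → m = ⊤ := fun m hm => (Set.ext_iff.1 hup m).1 ⟨hm.le, hm.ne'⟩
  have hsup_left : ∀ a b c, mul (a ⊔ b) c = mul a c ⊔ mul b c := fun a b c =>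
    map_sup_of_map_sSup (f := (mul · c)) (hsSup_left · c) a b
  have hsup_right : ∀ a b c, mul c (a ⊔ b) = mul c a ⊔ mul c b := fun a b c =>
    map_sup_of_map_sSup (f := mul c) (hsSup_right · c) a b
  have hmono_left : ∀ b, Monotone (mul · b) := fun b => monotone_of_map_sSup (hsSup_left · b)
  have hmono_right : ∀ a, Monotone (mul a) := fun a => monotone_of_map_sSup (hsSup_right · a)
  exact ⟨top_mul_le_of_sInf_le mul hsup_left hmono_right he_left he_right hγe hdown' hup' hinf,
    top_mul_le_of_sInf_le (fun a b => mul b a) hsup_right hmono_left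
      he_right he_left hγe hdown' hup' hinf⟩

/-- In a unital quantale whose unit `e` is isolated with `e⁻ = γ` and
`e⁺ = ⊤`, if `⨅ {β ⊔ γ | β ∈ Q, β ≠ e, β ≠ ⊤, β ≰ γ} ≤ γ`, then `γ` is two-sided:
`⊤ * γ ≤ γ` and `γ * ⊤ ≤ γ`. -/
theorem stmt_9 {Q : Type*} [CompleteLattice Q] (mul : Q → Q → Q)
    (hassoc : ∀ a b c : Q, mul (mul a b) c = mul a (mul b c))
    (hsSup_left : ∀ (A : Set Q) (b : Q), mul (sSup A) b = ⨆ a ∈ A, mul a b)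
    (hsSup_right : ∀ (A : Set Q) (b : Q), mul b (sSup A) = ⨆ a ∈ A, mul b a)
    (e : Q) (he_left : ∀ a : Q, mul e a = a) (he_right : ∀ a : Q, mul a e = a)
    (γ : Q)
    (hdown : {m : Q | m ≤ e} \ {e} = {m : Q | m ≤ γ})
    (hup : {m : Q | e ≤ m} \ {e} = {(⊤ : Q)})
    (hinf : sInf {z : Q | ∃ β : Q, β ≠ e ∧ β ≠ ⊤ ∧ ¬ β ≤ γ ∧ z = β ⊔ γ} ≤ γ) :
    mul ⊤ γ ≤ γ ∧ mul γ ⊤ ≤ γ :=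
  stmt_9_general mul hsSup_left hsSup_right e he_left he_right γ hdown hup hinf
end

section
/- Let Q be a quantale and γ ∈ Q with γ ≠ ⊤. Assume (a) γ * α ⊔ α * γ ≤ α for all α ∈ Q, and (b) for all α ∈ Q and all β ∈ Q with β ≰ γ one has ⊤ * α ≤ (β * α) ⊔ α and α * ⊤ ≤ (α * β) ⊔ α. Then there exist a unital quantale M with unit e and a map ι : Q → M which is injective, multiplicative (ι (p * q) = ι p * ι q for all p, q ∈ Q), preserves arbitrary suprema and preserves nonempty infima, such that: every element of M lies in range ι ∪ {e, ⊤_M}; e ∉ range ι, ⊤_M ∉ range ι, e ≠ ⊤_M; {m ∈ M | m ≤ e} \ {e} = {m ∈ M | m ≤ ι γ}; and {m ∈ M | e ≤ m} \ {e} = {⊤_M}. -/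
/-!
Adjoin a unit to `Q` freely: the unitization `Q × {0, 1}` is a unital quantale. On it, send every
element `(a, 1)` to `(γ, 1)` if `a ≤ γ` and to the top `(⊤, 1)` otherwise, and fix every `(a, 0)`.
Condition (a) says that `(γ, 1)` acts on `Q` as a subunit and condition (b) that `(⊤, 1)` acts
no worse than any `(b, 1)` with `b ≰ γ`; together they make this closure operator a quantic
nucleus, so its fixed points `Q ∪ {(γ, 1), ⊤}` form a unital quantale with unit `(γ, 1)`.
-/

open Quantale

section

variable {Q : Type*} [Semigroup Q] [CompleteLattice Q] [IsQuantale Q]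

theorem iSup_mul_distrib' {ι : Sort*} (f : ι → Q) (x : Q) : (⨆ i, f i) * x = ⨆ i, f i * x := by
  rw [← sSup_range, sSup_mul_distrib, iSup_range]

theorem mul_iSup_distrib' {ι : Sort*} (f : ι → Q) (x : Q) : x * (⨆ i, f i) = ⨆ i, x * f i := by
  rw [← sSup_range, mul_sSup_distrib, iSup_range]

end

structure QuanticNucleus (α : Type*) [Semigroup α] [CompleteLattice α]
    extends ClosureOperator α where
  map_mul_map_le' (a b : α) : toFun a * toFun b ≤ toFun (a * b)

namespace QuanticNucleus

section Semigroup

variable {α : Type*} [Semigroup α] [CompleteLattice α] (n : QuanticNucleus α)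

instance : FunLike (QuanticNucleus α) α α where
  coe n := n.toClosureOperator
  coe_injective := by
    rintro ⟨c, _⟩ ⟨c', _⟩ h
    congr
    exact DFunLike.coe_injective h

lemma map_mul_map_le (a b : α) : n a * n b ≤ n (a * b) := n.map_mul_map_le' a b

abbrev Closeds := n.toClosureOperator.Closeds

abbrev toCloseds (a : α) : n.Closeds := n.toClosureOperator.toCloseds a

lemma map_coe (a : n.Closeds) : n a = a := a.2.closure_eq

instance : CompleteLattice n.Closeds := n.toClosureOperator.gi.liftCompleteLattice

lemma toCloseds_iSup₂ {ι : Sort*} {κ : ι → Sort*} (f : ∀ i, κ i → α) :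
    n.toCloseds (⨆ (i) (j), f i j) = ⨆ (i) (j), n.toCloseds (f i j) :=
  n.toClosureOperator.gi.gc.l_iSup₂

lemma coe_iInf₂ {ι : Sort*} {κ : ι → Sort*} (f : ∀ i, κ i → n.Closeds) :
    ((⨅ (i) (j), f i j : n.Closeds) : α) = ⨅ (i) (j), (f i j : α) :=
  n.toClosureOperator.gi.gc.u_iInf₂

lemma coe_top : ((⊤ : n.Closeds) : α) = ⊤ :=
  n.toClosureOperator.gi.gc.u_top

instance : Mul n.Closeds := ⟨fun a b => n.toCloseds (a * b)⟩

lemma coe_mul (a b : n.Closeds) : ((a * b : n.Closeds) : α) = n (a * b) := rfl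

variable [IsQuantale α]

lemma map_map_mul (a b : α) : n (n a * b) = n (a * b) := by
  refine le_antisymm ?_ (n.monotone (mul_le_mul_left (n.le_closure a) b))
  calc n (n a * b) ≤ n (n a * n b) := n.monotone (mul_le_mul_right (n.le_closure b) _)
    _ ≤ n (a * b) :=
      n.toClosureOperator.closure_min (n.map_mul_map_le a b) (n.isClosed_closure _)

lemma map_mul_map (a b : α) : n (a * n b) = n (a * b) := by
  refine le_antisymm ?_ (n.monotone (mul_le_mul_right (n.le_closure b) a))
  calc n (a * n b) ≤ n (n a * n b) := n.monotone (mul_le_mul_left (n.le_closure a) _)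
    _ ≤ n (a * b) :=
      n.toClosureOperator.closure_min (n.map_mul_map_le a b) (n.isClosed_closure _)

instance : Semigroup n.Closeds where
  mul_assoc a b c := Subtype.ext <| by
    simp only [coe_mul, map_map_mul, map_mul_map, mul_assoc]

instance : IsQuantale n.Closeds where
  mul_sSup_distrib a s :=
    calc a * sSup s = n.toCloseds (a * sSup (Subtype.val '' s)) :=
          Subtype.ext (n.map_mul_map _ _)
      _ = n.toCloseds (⨆ b ∈ s, a * (b : α)) := by rw [mul_sSup_distrib, iSup_image]
      _ = ⨆ b ∈ s, a * b := n.toCloseds_iSup₂ _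
  sSup_mul_distrib s b :=
    calc sSup s * b = n.toCloseds (sSup (Subtype.val '' s) * b) :=
          Subtype.ext (n.map_map_mul _ _)
      _ = n.toCloseds (⨆ a ∈ s, (a : α) * b) := by rw [sSup_mul_distrib, iSup_image]
      _ = ⨆ a ∈ s, a * b := n.toCloseds_iSup₂ _

end Semigroup

section Monoid

variable {α : Type*} [Monoid α] [CompleteLattice α] [IsQuantale α] (n : QuanticNucleus α)

instance : Monoid n.Closeds where
  one := n.toCloseds 1
  one_mul a := Subtype.ext <| by
    show n (n 1 * a) = a
    rw [map_map_mul, one_mul, map_coe]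
  mul_one a := Subtype.ext <| by
    show n (a * n 1) = a
    rw [map_mul_map, mul_one, map_coe]

end Monoid

end QuanticNucleus

/-- The flag `p` of `(a, p)` is the coefficient of the adjoined unit; `⨆ _ : p, a` is `a` if `p`
holds and `⊥` otherwise. -/
abbrev QuantaleUnitization (Q : Type*) := Q × Prop

namespace QuantaleUnitization

variable {Q : Type*} [CompleteLattice Q]

lemma top_eq : (⊤ : QuantaleUnitization Q) = (⊤, True) := rfl

instance : One (QuantaleUnitization Q) := ⟨(⊥, True)⟩

@[simp] lemma one_def : (1 : QuantaleUnitization Q) = (⊥, True) := rfl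

section Mul

variable [Semigroup Q]

instance : Mul (QuantaleUnitization Q) where
  mul x y := (x.1 * y.1 ⊔ (⨆ _ : y.2, x.1) ⊔ ⨆ _ : x.2, y.1, x.2 ∧ y.2)

@[simp] lemma mk_mul_mk (a b : Q) (p q : Prop) :
    ((a, p) * (b, q) : QuantaleUnitization Q) = (a * b ⊔ (⨆ _ : q, a) ⊔ ⨆ _ : p, b, p ∧ q) :=
  rfl

lemma fst_mul (x y : QuantaleUnitization Q) :
    (x * y).1 = x.1 * y.1 ⊔ (⨆ _ : y.2, x.1) ⊔ ⨆ _ : x.2, y.1 := rfl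

lemma snd_mul (x y : QuantaleUnitization Q) : (x * y).2 = (x.2 ∧ y.2) := rfl

variable [IsQuantale Q]

instance : Monoid (QuantaleUnitization Q) where
  mul_assoc x y z := by
    refine Prod.ext ?_ (propext and_assoc)
    by_cases hx : x.2 <;> by_cases hy : y.2 <;> by_cases hz : z.2 <;>
      simp only [fst_mul, snd_mul, hx, hy, hz, iSup_pos, iSup_neg, not_false_eq_true, and_true,
        and_false, and_self, sup_bot_eq, sup_mul_distrib, mul_sup_distrib, mul_assoc] <;> ac_rfl
  one_mul := by rintro ⟨a, p⟩; simp
  mul_one := by rintro ⟨a, p⟩; simp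

lemma iSup_mul {ι : Sort*} (f : ι → QuantaleUnitization Q) (y : QuantaleUnitization Q) :
    (⨆ i, f i) * y = ⨆ i, f i * y := by
  refine Prod.ext ?_ ?_
  · simp only [fst_mul, Prod.fst_iSup, Prod.snd_iSup, iSup_Prop_eq, iSup_mul_distrib',
      iSup_sup_eq, iSup_exists]
    rw [iSup_comm (ι := y.2)]
  · simp only [snd_mul, Prod.snd_iSup, iSup_Prop_eq, exists_and_right]

lemma mul_iSup {ι : Sort*} (f : ι → QuantaleUnitization Q) (y : QuantaleUnitization Q) :
    y * (⨆ i, f i) = ⨆ i, y * f i := by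
  refine Prod.ext ?_ ?_
  · simp only [fst_mul, Prod.fst_iSup, Prod.snd_iSup, iSup_Prop_eq, mul_iSup_distrib',
      iSup_sup_eq, iSup_exists]
    rw [iSup_comm (ι := y.2)]
  · simp only [snd_mul, Prod.snd_iSup, iSup_Prop_eq, exists_and_left]

instance : IsQuantale (QuantaleUnitization Q) where
  mul_sSup_distrib x s := by rw [sSup_eq_iSup', mul_iSup, iSup_subtype']
  sSup_mul_distrib s y := by rw [sSup_eq_iSup', iSup_mul, iSup_subtype']

end Mul

lemma mk_false_sSup (A : Set Q) :
    ((sSup A, False) : QuantaleUnitization Q) = ⨆ a ∈ A, ((a, False) : QuantaleUnitization Q) := by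
  refine Prod.ext ?_ ?_ <;> simp [Prod.fst_iSup, Prod.snd_iSup, sSup_eq_iSup]

lemma mk_false_sInf {A : Set Q} (hA : A.Nonempty) :
    ((sInf A, False) : QuantaleUnitization Q) = ⨅ a ∈ A, ((a, False) : QuantaleUnitization Q) := by
  refine Prod.ext (by simp [Prod.fst_iInf, sInf_eq_iInf]) ?_
  obtain ⟨a, ha⟩ := hA
  simpa [Prod.snd_iInf] using ⟨a, ha⟩

variable (γ : Q)

open Classical in
noncomputable def isolatedUnitClosure : ClosureOperator (QuantaleUnitization Q) :=
  .ofPred (fun x => if x.2 then if x.1 ≤ γ then (γ, True) else ⊤ else x)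
    (fun x => ¬ x.2 ∨ x = (γ, True) ∨ x = ⊤)
    (by
      rintro ⟨a, p⟩
      by_cases hp : p
      · by_cases ha : a ≤ γ <;> simp [hp, ha, Prod.le_def]
      · simp [hp])
    (by
      rintro ⟨a, p⟩
      by_cases hp : p
      · by_cases ha : a ≤ γ <;> simp [hp, ha]
      · simp [hp])
    (by
      rintro ⟨a, p⟩ ⟨b, q⟩ hle hy
      by_cases hp : p
      · rcases hy with hq | hy | hy
        · exact absurd (hle.2 hp) hq
        · obtain ⟨rfl, rfl⟩ := Prod.mk.inj hy
          simp [hp, hle.1]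
        · exact hy.symm ▸ le_top
      · simpa [hp] using hle)

@[simp] lemma isolatedUnitClosure_mk_false (a : Q) :
    isolatedUnitClosure γ (a, False) = (a, False) := by
  simp [isolatedUnitClosure]

variable {γ}

lemma isolatedUnitClosure_mk_true_of_le {a : Q} (h : a ≤ γ) :
    isolatedUnitClosure γ (a, True) = (γ, True) := by
  simp [isolatedUnitClosure, h]

lemma isolatedUnitClosure_mk_true_of_not_le {a : Q} (h : ¬ a ≤ γ) :
    isolatedUnitClosure γ (a, True) = ⊤ := by
  simp [isolatedUnitClosure, h]

end QuantaleUnitization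

open QuantaleUnitization

structure AdmitsIsolatedUnit {Q : Type*} [Semigroup Q] [CompleteLattice Q] (γ : Q) : Prop where
  mul_sup_mul_le (a : Q) : γ * a ⊔ a * γ ≤ a
  top_mul_le_and_mul_top_le (a b : Q) : ¬ b ≤ γ → ⊤ * a ≤ b * a ⊔ a ∧ a * ⊤ ≤ a * b ⊔ a

namespace AdmitsIsolatedUnit

variable {Q : Type*} [Semigroup Q] [CompleteLattice Q] {γ : Q}

lemma isolatedUnitClosure_mul_le (h : AdmitsIsolatedUnit γ) (x y : QuantaleUnitization Q) :
    isolatedUnitClosure γ x * isolatedUnitClosure γ y ≤ isolatedUnitClosure γ (x * y) := by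
  obtain ⟨a, p⟩ := x
  obtain ⟨b, q⟩ := y
  obtain rfl | rfl := Classical.propComplete p <;> obtain rfl | rfl := Classical.propComplete q
  · by_cases hab : a * b ⊔ a ⊔ b ≤ γ
    · have haγ : a ≤ γ := le_sup_right.trans (le_sup_left.trans hab)
      have hbγ : b ≤ γ := le_sup_right.trans hab
      simpa [isolatedUnitClosure_mk_true_of_le haγ, isolatedUnitClosure_mk_true_of_le hbγ,
        isolatedUnitClosure_mk_true_of_le hab] using le_sup_left.trans (h.mul_sup_mul_le γ)
    · simp [isolatedUnitClosure_mk_true_of_not_le hab]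
  · by_cases ha : a ≤ γ
    · simpa [isolatedUnitClosure_mk_true_of_le ha] using
        (le_sup_left.trans (h.mul_sup_mul_le b)).trans (le_sup_right (a := a * b))
    · simpa [isolatedUnitClosure_mk_true_of_not_le ha, top_eq] using
        (h.top_mul_le_and_mul_top_le b a ha).1
  · by_cases hb : b ≤ γ
    · simpa [isolatedUnitClosure_mk_true_of_le hb] using
        (le_sup_right.trans (h.mul_sup_mul_le a)).trans (le_sup_right (a := a * b))
    · simpa [isolatedUnitClosure_mk_true_of_not_le hb, top_eq] using
        (h.top_mul_le_and_mul_top_le a b hb).2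
  · simp

variable [IsQuantale Q] (h : AdmitsIsolatedUnit γ)

noncomputable def nucleus : QuanticNucleus (QuantaleUnitization Q) where
  __ := isolatedUnitClosure γ
  map_mul_map_le' := h.isolatedUnitClosure_mul_le

@[simp] lemma coe_nucleus : ⇑h.nucleus = isolatedUnitClosure γ := rfl

abbrev Extension := h.nucleus.Closeds

def of (a : Q) : h.Extension := ⟨(a, False), Or.inl not_false⟩

@[simp] lemma coe_of (a : Q) : (h.of a : QuantaleUnitization Q) = (a, False) := rfl

@[simp] lemma coe_top : ((⊤ : h.Extension) : QuantaleUnitization Q) = (⊤, True) :=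
  h.nucleus.coe_top

lemma of_injective : Function.Injective h.of := fun _ _ hab => by
  simpa using congrArg Subtype.val hab

@[simp] lemma coe_one : ((1 : h.Extension) : QuantaleUnitization Q) = (γ, True) :=
  isolatedUnitClosure_mk_true_of_le bot_le

lemma of_mul (a b : Q) : h.of (a * b) = h.of a * h.of b :=
  Subtype.ext <| by simp [QuanticNucleus.coe_mul]

lemma of_sSup (A : Set Q) : h.of (sSup A) = ⨆ a ∈ A, h.of a := by
  have of_eq (a : Q) : h.of a = h.nucleus.toCloseds (a, False) :=
    Subtype.ext (isolatedUnitClosure_mk_false γ a).symm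
  simp only [of_eq, mk_false_sSup, QuanticNucleus.toCloseds_iSup₂]

lemma of_sInf {A : Set Q} (hA : A.Nonempty) : h.of (sInf A) = ⨅ a ∈ A, h.of a :=
  Subtype.ext <| by simp only [QuanticNucleus.coe_iInf₂, coe_of, mk_false_sInf hA]

lemma mem_range_of_or_eq_one_or_eq_top (m : h.Extension) : m ∈ Set.range h.of ∨ m = 1 ∨ m = ⊤ := by
  obtain ⟨⟨a, p⟩, hp | hm | hm⟩ := m
  · exact Or.inl ⟨a, Subtype.ext (by simp [eq_false (show ¬p from hp)])⟩
  · exact Or.inr (Or.inl (Subtype.ext (by rw [coe_one]; exact hm)))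
  · exact Or.inr (Or.inr (Subtype.ext (by rw [coe_top]; exact hm)))

lemma one_notMem_range_of : (1 : h.Extension) ∉ Set.range h.of := by
  rintro ⟨a, ha⟩
  simpa using congrArg Subtype.val ha

lemma top_notMem_range_of : (⊤ : h.Extension) ∉ Set.range h.of := by
  rintro ⟨a, ha⟩
  simpa using congrArg Subtype.val ha

lemma one_ne_top (hγ : γ ≠ ⊤) : (1 : h.Extension) ≠ ⊤ := by
  intro h1
  simpa [hγ] using congrArg Subtype.val h1

lemma setOf_le_one_diff_one (hγ : γ ≠ ⊤) : {m : h.Extension | m ≤ 1} \ {1} = {m | m ≤ h.of γ} := by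
  ext m
  rcases h.mem_range_of_or_eq_one_or_eq_top m with ⟨a, rfl⟩ | rfl | rfl <;>
    simp [← Subtype.coe_le_coe, Subtype.ext_iff, hγ]

lemma setOf_one_le_diff_one (hγ : γ ≠ ⊤) : {m : h.Extension | 1 ≤ m} \ {1} = {⊤} := by
  ext m
  rcases h.mem_range_of_or_eq_one_or_eq_top m with ⟨a, rfl⟩ | rfl | rfl <;>
    simp [← Subtype.coe_le_coe, Subtype.ext_iff, hγ, hγ.symm]

end AdmitsIsolatedUnit

/-- A quantale `Q` with `γ ≠ ⊤` satisfying conditions (a) and (b)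
extends to a unital quantale `M` obtained by adding an isolated unit `e`
(with `e⁻ = ι γ` and `e⁺ = ⊤`) and a new top, `Q` embedding as a subquantale. -/
theorem stmt_10 {Q : Type u} [CompleteLattice Q] (mul : Q → Q → Q)
    (hassoc : ∀ a b c : Q, mul (mul a b) c = mul a (mul b c))
    (hsSup_left : ∀ (A : Set Q) (b : Q), mul (sSup A) b = ⨆ a ∈ A, mul a b)
    (hsSup_right : ∀ (A : Set Q) (b : Q), mul b (sSup A) = ⨆ a ∈ A, mul b a)
    (γ : Q) (hγ : γ ≠ ⊤)
    (ha : ∀ α : Q, mul γ α ⊔ mul α γ ≤ α)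
    (hb : ∀ α β : Q, ¬ β ≤ γ →
      mul ⊤ α ≤ mul β α ⊔ α ∧ mul α ⊤ ≤ mul α β ⊔ α) :
    ∃ (M : Type u) (_ : CompleteLattice M) (mulM : M → M → M) (e : M) (ι : Q → M),
      (∀ a b c : M, mulM (mulM a b) c = mulM a (mulM b c)) ∧
      (∀ (A : Set M) (b : M), mulM (sSup A) b = ⨆ a ∈ A, mulM a b) ∧
      (∀ (A : Set M) (b : M), mulM b (sSup A) = ⨆ a ∈ A, mulM b a) ∧
      (∀ m : M, mulM e m = m ∧ mulM m e = m) ∧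
      Function.Injective ι ∧
      (∀ p q : Q, ι (mul p q) = mulM (ι p) (ι q)) ∧
      (∀ A : Set Q, ι (sSup A) = ⨆ a ∈ A, ι a) ∧
      (∀ A : Set Q, A.Nonempty → ι (sInf A) = ⨅ a ∈ A, ι a) ∧
      (∀ m : M, m ∈ Set.range ι ∨ m = e ∨ m = ⊤) ∧
      e ∉ Set.range ι ∧ (⊤ : M) ∉ Set.range ι ∧ e ≠ ⊤ ∧
      ({m : M | m ≤ e} \ {e} = {m : M | m ≤ ι γ}) ∧
      ({m : M | e ≤ m} \ {e} = {(⊤ : M)}) := by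
  let _ : Semigroup Q := { mul := mul, mul_assoc := hassoc }
  have _ : IsQuantale Q := ⟨fun a A => hsSup_right A a, hsSup_left⟩
  have h : AdmitsIsolatedUnit γ := ⟨ha, hb⟩
  exact ⟨h.Extension, inferInstance, (· * ·), 1, h.of, mul_assoc,
    fun _ _ => sSup_mul_distrib, fun _ _ => mul_sSup_distrib, fun m => ⟨one_mul m, mul_one m⟩,
    h.of_injective, h.of_mul, h.of_sSup, fun _ => h.of_sInf, h.mem_range_of_or_eq_one_or_eq_top,
    h.one_notMem_range_of, h.top_notMem_range_of, h.one_ne_top hγ, h.setOf_le_one_diff_one hγ,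
    h.setOf_one_le_diff_one hγ⟩
end

section
/- Let Q be a finite unital quantale with unit e, let α, β ∈ Q be atoms with α ≠ β, and put a = α ⊔ β and γ = e ⊓ a. Assume: e and a are incomparable; γ ≰ α and γ ≰ β; {m ∈ Q | m ≤ e} \ {e} = {m ∈ Q | m ≤ γ}; {m ∈ Q | e ≤ m} \ {e} = {m ∈ Q | e ⊔ a ≤ m}; and every element of Q equals one of ⊥, α, β, γ, α ⊔ γ, β ⊔ γ, a, e, e ⊔ a. Then a * a ≤ a. Moreover, for every λ ∈ Q with λ ≤ a one has γ * λ ⊔ λ * γ ≤ λ, and for every λ, δ ∈ Q with λ ≤ a, δ ≤ a and δ ≰ γ one has a * λ ≤ (δ * λ) ⊔ λ and λ * a ≤ (λ * δ) ⊔ λ. -/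
/-- Let `Q` be a finite unital quantale with unit `e`, atoms `α ≠ β`,
`a = α ⊔ β`, `γ = e ⊓ a`, where `e` and `a` are incomparable, `γ ≰ α`, `γ ≰ β`, the
unit `e` is isolated with `e⁻ = γ` and `e⁺ = e ⊔ a`, and every element of `Q` is one
of `⊥, α, β, γ, α ⊔ γ, β ⊔ γ, a, e, e ⊔ a`. Then `a * a ≤ a`, and the subquantale on
`↓a` satisfies conditions (3.2) and (3.3). -/
theorem stmt_14 {Q : Type*} [CompleteLattice Q] [Fintype Q] (mul : Q → Q → Q)
    (hassoc : ∀ a b c : Q, mul (mul a b) c = mul a (mul b c))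
    (hsSup_left : ∀ (A : Set Q) (b : Q), mul (sSup A) b = ⨆ a ∈ A, mul a b)
    (hsSup_right : ∀ (A : Set Q) (b : Q), mul b (sSup A) = ⨆ a ∈ A, mul b a)
    (e : Q) (he_left : ∀ a : Q, mul e a = a) (he_right : ∀ a : Q, mul a e = a)
    (α β : Q) (hα : IsAtom α) (hβ : IsAtom β) (hαβ : α ≠ β)
    (hinc1 : ¬ e ≤ α ⊔ β) (hinc2 : ¬ α ⊔ β ≤ e)
    (hγα : ¬ e ⊓ (α ⊔ β) ≤ α) (hγβ : ¬ e ⊓ (α ⊔ β) ≤ β)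
    (hdown : {m : Q | m ≤ e} \ {e} = {m : Q | m ≤ e ⊓ (α ⊔ β)})
    (hup : {m : Q | e ≤ m} \ {e} = {m : Q | e ⊔ (α ⊔ β) ≤ m})
    (hcover : ∀ q : Q, q = ⊥ ∨ q = α ∨ q = β ∨ q = e ⊓ (α ⊔ β) ∨
      q = α ⊔ (e ⊓ (α ⊔ β)) ∨ q = β ⊔ (e ⊓ (α ⊔ β)) ∨ q = α ⊔ β ∨
      q = e ∨ q = e ⊔ (α ⊔ β)) :
    mul (α ⊔ β) (α ⊔ β) ≤ α ⊔ β ∧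
    (∀ lam : Q, lam ≤ α ⊔ β →
      mul (e ⊓ (α ⊔ β)) lam ⊔ mul lam (e ⊓ (α ⊔ β)) ≤ lam) ∧
    (∀ lam d : Q, lam ≤ α ⊔ β → d ≤ α ⊔ β → ¬ d ≤ e ⊓ (α ⊔ β) →
      mul (α ⊔ β) lam ≤ mul d lam ⊔ lam ∧ mul lam (α ⊔ β) ≤ mul lam d ⊔ lam) := by
  -- basic consequences of the sSup laws
  have hsup_l : ∀ x y b : Q, mul (x ⊔ y) b = mul x b ⊔ mul y b := by
    intro x y b
    have h := hsSup_left {x, y} b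
    rw [sSup_pair] at h
    rw [h, iSup_pair]
  have hsup_r : ∀ x y b : Q, mul b (x ⊔ y) = mul b x ⊔ mul b y := by
    intro x y b
    have h := hsSup_right {x, y} b
    rw [sSup_pair] at h
    rw [h, iSup_pair]
  have hbot_l : ∀ b : Q, mul ⊥ b = ⊥ := by
    intro b
    have h := hsSup_left ∅ b
    simpa using h
  have hmono_l : ∀ {x y : Q} (b : Q), x ≤ y → mul x b ≤ mul y b := by
    intro x y b hxy
    have h := hsup_l x y b
    rw [sup_eq_right.mpr hxy] at h
    rw [h]
    exact le_sup_left
  have hmono_r : ∀ {x y : Q} (b : Q), x ≤ y → mul b x ≤ mul b y := by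
    intro x y b hxy
    have h := hsup_r x y b
    rw [sup_eq_right.mpr hxy] at h
    rw [h]
    exact le_sup_left
  have htop : ∀ q : Q, q ≤ e ⊔ (α ⊔ β) := by
    intro q
    rcases hcover q with h|h|h|h|h|h|h|h|h <;> rw [h]
    · exact bot_le
    · exact le_sup_of_le_right le_sup_left
    · exact le_sup_of_le_right le_sup_right
    · exact le_sup_of_le_right inf_le_right
    · exact sup_le (le_sup_of_le_right le_sup_left) (le_sup_of_le_right inf_le_right)
    · exact sup_le (le_sup_of_le_right le_sup_right) (le_sup_of_le_right inf_le_right)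
    · exact le_sup_right
    · exact le_sup_left
  -- key lemma: any product with an atom on the left lands below α ⊔ β
  have key : ∀ x y : Q, IsAtom x → mul x y ≤ α ⊔ β := by
    intro x y hx
    by_cases hle : mul x y ≤ α ⊔ β
    · exact hle
    have he : e ≤ mul x y := by
      rcases hcover (mul x y) with h|h|h|h|h|h|h|h|h <;> rw [h] at hle ⊢ <;>
        first
        | exact le_refl e
        | exact le_sup_left
        | exact absurd bot_le hle
        | exact absurd le_sup_left hle
        | exact absurd le_sup_right hle
        | exact absurd inf_le_right hle
        | exact absurd (sup_le le_sup_left inf_le_right) hle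
        | exact absurd (sup_le le_sup_right inf_le_right) hle
        | exact absurd (le_refl _) hle
    have hgx : mul (e ⊓ (α ⊔ β)) x ≤ x := by
      calc mul (e ⊓ (α ⊔ β)) x ≤ mul e x := hmono_l x inf_le_left
        _ = x := he_left x
    rcases hx.le_iff.mp hgx with h0 | h0
    · exfalso
      have hgb : e ⊓ (α ⊔ β) ≤ ⊥ := by
        calc e ⊓ (α ⊔ β) = mul (e ⊓ (α ⊔ β)) e := (he_right _).symm
          _ ≤ mul (e ⊓ (α ⊔ β)) (mul x y) := hmono_r _ he
          _ = mul (mul (e ⊓ (α ⊔ β)) x) y := (hassoc _ _ _).symm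
          _ = mul ⊥ y := by rw [h0]
          _ = ⊥ := hbot_l y
      exact hγα (by rw [le_bot_iff.mp hgb]; exact bot_le)
    · calc mul x y = mul (mul (e ⊓ (α ⊔ β)) x) y := by rw [h0]
        _ = mul (e ⊓ (α ⊔ β)) (mul x y) := hassoc _ _ _
        _ ≤ mul (e ⊓ (α ⊔ β)) (e ⊔ (α ⊔ β)) := hmono_r _ (htop _)
        _ = mul (e ⊓ (α ⊔ β)) e ⊔ mul (e ⊓ (α ⊔ β)) (α ⊔ β) := hsup_r _ _ _
        _ ≤ α ⊔ β := by
            apply sup_le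
            · rw [he_right]; exact inf_le_right
            · exact le_trans (hmono_l _ inf_le_left) (he_left (α ⊔ β)).le
  refine ⟨?_, ?_, ?_⟩
  · rw [hsup_l]
    exact sup_le (key α (α ⊔ β) hα) (key β (α ⊔ β) hβ)
  · intro lam _
    apply sup_le
    · calc mul (e ⊓ (α ⊔ β)) lam ≤ mul e lam := hmono_l lam inf_le_left
        _ = lam := he_left lam
    · calc mul lam (e ⊓ (α ⊔ β)) ≤ mul lam e := hmono_r lam inf_le_left
        _ = lam := he_right lam
  · intro lam d hlam hd hdg
    have hde : ¬ d ≤ e := by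
      intro hle
      have hdne : d ≠ e := by rintro rfl; exact hinc1 hd
      have hmem : d ∈ {m : Q | m ≤ e} \ {e} := ⟨hle, hdne⟩
      rw [hdown] at hmem
      exact hdg hmem
    have hged : e ⊔ (α ⊔ β) ≤ e ⊔ d := by
      have hmem : e ⊔ d ∈ {m : Q | e ≤ m} \ {e} := by
        refine ⟨le_sup_left, ?_⟩
        simp only [Set.mem_singleton_iff]
        intro h
        exact hde (sup_eq_left.mp h)
      rw [hup] at hmem
      exact hmem
    have hale : α ⊔ β ≤ e ⊔ d := le_trans le_sup_right hged
    constructor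
    · calc mul (α ⊔ β) lam ≤ mul (e ⊔ d) lam := hmono_l lam hale
        _ = mul e lam ⊔ mul d lam := hsup_l e d lam
        _ = lam ⊔ mul d lam := by rw [he_left]
        _ = mul d lam ⊔ lam := sup_comm _ _
    · calc mul lam (α ⊔ β) ≤ mul lam (e ⊔ d) := hmono_r lam hale
        _ = mul lam e ⊔ mul lam d := hsup_r e d lam
        _ = lam ⊔ mul lam d := by rw [he_right]
        _ = mul lam d ⊔ lam := sup_comm _ _
end

section
/- Let Q be a quantale with exactly five pairwise distinct elements ⊥, α, β, γ, ⊤ (every element of Q is one of these) such that α, β, γ are pairwise incomparable, each pairwise join of α, β, γ equals ⊤ and each pairwise meet equals ⊥ (the diamond M3). Assume γ * a ⊔ a * γ ≤ a for all a ∈ Q. Then Q has a two-sided multiplicative unit if and only if γ * γ = γ; and in that case γ is the unit (γ * a = a = a * γ for all a ∈ Q). -/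
/-!
Multiplication by `γ` on either side is a sup-preserving, deflationary map `f` of the diamond.
Such a map sends `α` into `{⊥, α}` and `β` into `{⊥, β}`, so `f ⊤ = f α ⊔ f β` lies in
`{⊥, α, β, ⊤}`; if moreover `γ ≤ f ⊤`, the only possibility is `f α = α`, `f β = β`, `f ⊤ = ⊤`.
If `γ * γ = γ`, monotonicity gives `γ ≤ f ⊤`, and `f` is the identity. Conversely a unit `u`
satisfies `γ = γ * u ≤ u`, so `u` is `γ` or `⊤`; and `⊤` is not a unit, since `⊤ * γ = γ` would
force `⊤ * γ = ⊤`.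
-/

def SupHom.ofMapSSup {Q : Type*} [CompleteLattice Q] (f : Q → Q)
    (hf : ∀ A : Set Q, f (sSup A) = ⨆ a ∈ A, f a) : SupHom Q Q where
  toFun := f
  map_sup' x y := by rw [← sSup_pair, hf, iSup_pair]

section Diamond

variable {Q : Type*} [CompleteLattice Q] {α β γ : Q}

lemma eq_bot_or_eq_of_le_of_mem_five {a b c x : Q}
    (hx : x = ⊥ ∨ x = a ∨ x = b ∨ x = c ∨ x = ⊤) (hba : ¬ b ≤ a) (hca : ¬ c ≤ a)
    (hxa : x ≤ a) : x = ⊥ ∨ x = a := by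
  rcases hx with rfl | rfl | rfl | rfl | rfl
  · exact .inl rfl
  · exact .inr rfl
  · exact absurd hxa hba
  · exact absurd hxa hca
  · exact absurd (le_top.trans hxa) hba

lemma map_atoms_eq_of_le_map_top (hcover : ∀ q : Q, q = ⊥ ∨ q = α ∨ q = β ∨ q = γ ∨ q = ⊤)
    (hαβ : ¬ α ≤ β ∧ ¬ β ≤ α) (hγα : ¬ γ ≤ α) (hγβ : ¬ γ ≤ β) (hjαβ : α ⊔ β = ⊤)
    (f : SupHom Q Q) (hf : ∀ x, f x ≤ x) (hγ : γ ≤ f ⊤) : f α = α ∧ f β = β := by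
  have hfα : f α = ⊥ ∨ f α = α :=
    eq_bot_or_eq_of_le_of_mem_five (hcover (f α)) hαβ.2 hγα (hf α)
  have hfβ : f β = ⊥ ∨ f β = β :=
    eq_bot_or_eq_of_le_of_mem_five (by have := hcover (f β); tauto) hαβ.1 hγβ (hf β)
  rw [← hjαβ, map_sup] at hγ
  rcases hfα with hfα | hfα <;> rcases hfβ with hfβ | hfβ <;> rw [hfα, hfβ] at hγ
  · exact absurd (hγ.trans (by simp)) hγα
  · exact absurd (hγ.trans (by simp)) hγβ
  · exact absurd (hγ.trans (by simp)) hγα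
  · exact ⟨hfα, hfβ⟩

lemma map_top_eq_top_of_le_map_top (hcover : ∀ q : Q, q = ⊥ ∨ q = α ∨ q = β ∨ q = γ ∨ q = ⊤)
    (hαβ : ¬ α ≤ β ∧ ¬ β ≤ α) (hγα : ¬ γ ≤ α) (hγβ : ¬ γ ≤ β) (hjαβ : α ⊔ β = ⊤)
    (f : SupHom Q Q) (hf : ∀ x, f x ≤ x) (hγ : γ ≤ f ⊤) : f ⊤ = ⊤ := by
  obtain ⟨hfα, hfβ⟩ := map_atoms_eq_of_le_map_top hcover hαβ hγα hγβ hjαβ f hf hγ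
  rw [← hjαβ, map_sup, hfα, hfβ]

lemma map_eq_self_of_map_eq (hcover : ∀ q : Q, q = ⊥ ∨ q = α ∨ q = β ∨ q = γ ∨ q = ⊤)
    (hαβ : ¬ α ≤ β ∧ ¬ β ≤ α) (hγα : ¬ γ ≤ α) (hγβ : ¬ γ ≤ β) (hjαβ : α ⊔ β = ⊤)
    (f : SupHom Q Q) (hf : ∀ x, f x ≤ x) (hγ : f γ = γ) (a : Q) : f a = a := by
  have hγ_le : γ ≤ f ⊤ := hγ ▸ OrderHomClass.mono f le_top
  obtain ⟨hfα, hfβ⟩ := map_atoms_eq_of_le_map_top hcover hαβ hγα hγβ hjαβ f hf hγ_le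
  rcases hcover a with rfl | rfl | rfl | rfl | rfl
  · exact le_bot_iff.mp (hf ⊥)
  · exact hfα
  · exact hfβ
  · exact hγ
  · exact map_top_eq_top_of_le_map_top hcover hαβ hγα hγβ hjαβ f hf hγ_le

end Diamond

theorem stmt_15_general {Q : Type*} [CompleteLattice Q] (mul : Q → Q → Q)
    (hsSup_left : ∀ (A : Set Q) (b : Q), mul (sSup A) b = ⨆ a ∈ A, mul a b)
    (hsSup_right : ∀ (A : Set Q) (b : Q), mul b (sSup A) = ⨆ a ∈ A, mul b a)
    (α β γ : Q)
    (hcover : ∀ q : Q, q = ⊥ ∨ q = α ∨ q = β ∨ q = γ ∨ q = ⊤)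
    (hαβ : ¬ α ≤ β ∧ ¬ β ≤ α) (hαγ : ¬ α ≤ γ ∧ ¬ γ ≤ α) (hβγ : ¬ β ≤ γ ∧ ¬ γ ≤ β)
    (hjαβ : α ⊔ β = ⊤)
    (hprop : ∀ a : Q, mul γ a ⊔ mul a γ ≤ a) :
    ((∃ u : Q, ∀ a : Q, mul u a = a ∧ mul a u = a) ↔ mul γ γ = γ) ∧
    (mul γ γ = γ → ∀ a : Q, mul γ a = a ∧ mul a γ = a) := by
  let L := SupHom.ofMapSSup (mul γ) (hsSup_right · γ)
  let R := SupHom.ofMapSSup (mul · γ) (hsSup_left · γ)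
  have hL : ∀ a, L a ≤ a := fun a => le_sup_left.trans (hprop a)
  have hR : ∀ a, R a ≤ a := fun a => le_sup_right.trans (hprop a)
  have unit_of_idem (h : mul γ γ = γ) (a : Q) : mul γ a = a ∧ mul a γ = a :=
    ⟨map_eq_self_of_map_eq hcover hαβ hαγ.2 hβγ.2 hjαβ L hL h a,
      map_eq_self_of_map_eq hcover hαβ hαγ.2 hβγ.2 hjαβ R hR h a⟩
  refine ⟨⟨fun ⟨u, hu⟩ => ?_, fun h => ⟨γ, unit_of_idem h⟩⟩, unit_of_idem⟩
  have hγu : γ ≤ u := by simpa only [(hu γ).1, (hu γ).2, sup_idem] using hprop u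
  rcases hcover u with rfl | rfl | rfl | rfl | rfl
  · exact absurd (hγu.trans bot_le) hαγ.2
  · exact absurd hγu hαγ.2
  · exact absurd hγu hβγ.2
  · exact (hu u).1
  · have hRtop : R ⊤ = γ := (hu γ).1
    have hγ_top : γ = ⊤ :=
      hRtop.symm.trans (map_top_eq_top_of_le_map_top hcover hαβ hαγ.2 hβγ.2 hjαβ R hR hRtop.ge)
    exact absurd (hγ_top ▸ le_top) hαγ.1

/-- Let `Q` be a quantale on the diamond `M3` (exactly the five
pairwise distinct elements `⊥, α, β, γ, ⊤`, with `α, β, γ` pairwise incomparable,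
pairwise joins `⊤` and pairwise meets `⊥`) such that `γ * a ⊔ a * γ ≤ a` for all
`a`. Then `Q` has a two-sided unit iff `γ * γ = γ`, in which case `γ` is the unit. -/
theorem stmt_15 {Q : Type*} [CompleteLattice Q] (mul : Q → Q → Q)
    (hassoc : ∀ a b c : Q, mul (mul a b) c = mul a (mul b c))
    (hsSup_left : ∀ (A : Set Q) (b : Q), mul (sSup A) b = ⨆ a ∈ A, mul a b)
    (hsSup_right : ∀ (A : Set Q) (b : Q), mul b (sSup A) = ⨆ a ∈ A, mul b a)
    (α β γ : Q)
    (hdistinct : ([⊥, α, β, γ, ⊤] : List Q).Pairwise (· ≠ ·))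
    (hcover : ∀ q : Q, q = ⊥ ∨ q = α ∨ q = β ∨ q = γ ∨ q = ⊤)
    (hαβ : ¬ α ≤ β ∧ ¬ β ≤ α) (hαγ : ¬ α ≤ γ ∧ ¬ γ ≤ α) (hβγ : ¬ β ≤ γ ∧ ¬ γ ≤ β)
    (hjαβ : α ⊔ β = ⊤) (hjαγ : α ⊔ γ = ⊤) (hjβγ : β ⊔ γ = ⊤)
    (hmαβ : α ⊓ β = ⊥) (hmαγ : α ⊓ γ = ⊥) (hmβγ : β ⊓ γ = ⊥)
    (hprop : ∀ a : Q, mul γ a ⊔ mul a γ ≤ a) :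
    ((∃ u : Q, ∀ a : Q, mul u a = a ∧ mul a u = a) ↔ mul γ γ = γ) ∧
    (mul γ γ = γ → ∀ a : Q, mul γ a = a ∧ mul a γ = a) :=
  stmt_15_general mul hsSup_left hsSup_right α β γ hcover hαβ hαγ hβγ hjαβ hprop
end

section
/- Let Q be a quantale with exactly five pairwise distinct elements ⊥, α, γ, β, ⊤ (every element of Q is one of these) such that ⊥ < α < γ < ⊤, ⊥ < β < ⊤, and β is incomparable with both α and γ (the pentagon N5; hence α ⊔ β = γ ⊔ β = ⊤ and γ ⊓ β = ⊥). Assume γ * a ⊔ a * γ ≤ a for all a ∈ Q. Then Q has a two-sided multiplicative unit if and only if γ * γ = γ; and in that case γ is the unit (γ * a = a = a * γ for all a ∈ Q). -/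
/-!
Left and right multiplication by `γ` are join-preserving maps `f` with `f x ≤ x`. On `N5` such
a map is pinned down by its value at `γ`: from `f α ⊔ f β = f ⊤ = f γ ⊔ f β`, `f α ≤ α` and
`f β ≤ β`, the assumption `f γ = γ` forces `f β = β`, then `f α = α` and `f ⊤ = ⊤`. Conversely a
unit `u` satisfies `γ = γ * u ≤ u`, so `u = γ` or `u = ⊤`; in the latter case
`γ * γ ⊔ γ * β = γ * ⊤ = γ` with `γ * β ≤ β`, which forces `γ * β = ⊥` and `γ * γ = γ`.
-/

structure IsPentagon {L : Type*} [Lattice L] [BoundedOrder L] (α γ β : L) : Prop where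
  eq_or : ∀ q : L, q = ⊥ ∨ q = α ∨ q = γ ∨ q = β ∨ q = ⊤
  alpha_lt_gamma : α < γ
  not_alpha_le_beta : ¬ α ≤ β
  not_beta_le_gamma : ¬ β ≤ γ
  not_gamma_le_beta : ¬ γ ≤ β

namespace IsPentagon

variable {L : Type*} [Lattice L] [BoundedOrder L] {α γ β : L}

theorem not_beta_le_alpha (h : IsPentagon α γ β) : ¬ β ≤ α :=
  fun hβα => h.not_beta_le_gamma (hβα.trans h.alpha_lt_gamma.le)

theorem not_gamma_le_alpha (h : IsPentagon α γ β) : ¬ γ ≤ α :=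
  h.alpha_lt_gamma.not_ge

theorem gamma_sup_beta (h : IsPentagon α γ β) : γ ⊔ β = ⊤ := by
  rcases h.eq_or (γ ⊔ β) with e | e | e | e | e
  · exact absurd ((le_sup_right.trans e.le).trans bot_le) h.not_beta_le_gamma
  · exact absurd (le_sup_left.trans e.le) h.not_gamma_le_alpha
  · exact absurd (le_sup_right.trans e.le) h.not_beta_le_gamma
  · exact absurd (le_sup_left.trans e.le) h.not_gamma_le_beta
  · exact e

theorem alpha_sup_beta (h : IsPentagon α γ β) : α ⊔ β = ⊤ := by
  rcases h.eq_or (α ⊔ β) with e | e | e | e | e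
  · exact absurd ((le_sup_right.trans e.le).trans bot_le) h.not_beta_le_alpha
  · exact absurd (le_sup_right.trans e.le) h.not_beta_le_alpha
  · exact absurd (le_sup_right.trans e.le) h.not_beta_le_gamma
  · exact absurd (le_sup_left.trans e.le) h.not_alpha_le_beta
  · exact e

theorem beta_ne_top (h : IsPentagon α γ β) : β ≠ ⊤ :=
  fun e => h.not_gamma_le_beta (e ▸ le_top)

theorem eq_bot_or_eq_of_le_alpha (h : IsPentagon α γ β) {x : L} (hx : x ≤ α) :
    x = ⊥ ∨ x = α := by
  rcases h.eq_or x with e | e | e | e | e <;> subst e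
  · exact .inl rfl
  · exact .inr rfl
  · exact absurd hx h.not_gamma_le_alpha
  · exact absurd hx h.not_beta_le_alpha
  · exact absurd (le_top.trans hx) h.not_gamma_le_alpha

theorem eq_bot_or_eq_of_le_beta (h : IsPentagon α γ β) {x : L} (hx : x ≤ β) :
    x = ⊥ ∨ x = β := by
  rcases h.eq_or x with e | e | e | e | e <;> subst e
  · exact .inl rfl
  · exact absurd hx h.not_alpha_le_beta
  · exact absurd hx h.not_gamma_le_beta
  · exact .inr rfl
  · exact absurd (le_top.trans hx) h.not_gamma_le_beta

theorem eq_or_eq_top_of_gamma_le (h : IsPentagon α γ β) {x : L} (hx : γ ≤ x) :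
    x = γ ∨ x = ⊤ := by
  rcases h.eq_or x with e | e | e | e | e <;> subst e
  · exact absurd (hx.trans bot_le) h.not_gamma_le_alpha
  · exact absurd hx h.not_gamma_le_alpha
  · exact .inl rfl
  · exact absurd hx h.not_gamma_le_beta
  · exact .inr rfl

variable {F : Type*} [FunLike F L L] [SupHomClass F L L]

theorem map_beta_of_map_gamma (h : IsPentagon α γ β) (f : F) (hf : ∀ x, f x ≤ x)
    (hγ : f γ = γ) : f β = β := by
  refine (h.eq_bot_or_eq_of_le_beta (hf β)).resolve_left fun hβ => h.not_gamma_le_alpha ?_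
  have hsplit : f α ⊔ f β = f γ ⊔ f β := by
    rw [← map_sup, ← map_sup, h.alpha_sup_beta, h.gamma_sup_beta]
  rw [hγ, hβ, sup_bot_eq, sup_bot_eq] at hsplit
  exact hsplit ▸ hf α

theorem map_alpha_of_map_gamma (h : IsPentagon α γ β) (f : F) (hf : ∀ x, f x ≤ x)
    (hγ : f γ = γ) : f α = α := by
  refine (h.eq_bot_or_eq_of_le_alpha (hf α)).resolve_left fun hα => h.beta_ne_top ?_
  have hsplit : f α ⊔ f β = f γ ⊔ f β := by
    rw [← map_sup, ← map_sup, h.alpha_sup_beta, h.gamma_sup_beta]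
  rwa [hα, h.map_beta_of_map_gamma f hf hγ, hγ, bot_sup_eq, h.gamma_sup_beta] at hsplit

theorem map_eq_self_of_map_gamma (h : IsPentagon α γ β) (f : F) (hf : ∀ x, f x ≤ x)
    (hγ : f γ = γ) (x : L) : f x = x := by
  rcases h.eq_or x with e | e | e | e | e <;> subst e
  · exact le_bot_iff.mp (hf ⊥)
  · exact h.map_alpha_of_map_gamma f hf hγ
  · exact hγ
  · exact h.map_beta_of_map_gamma f hf hγ
  · rw [← h.gamma_sup_beta, map_sup, hγ, h.map_beta_of_map_gamma f hf hγ]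

theorem map_gamma_of_map_top (h : IsPentagon α γ β) (f : F) (hf : ∀ x, f x ≤ x)
    (htop : f ⊤ = γ) : f γ = γ := by
  have hsplit : f γ ⊔ f β = γ := by rw [← map_sup, h.gamma_sup_beta, htop]
  rcases h.eq_bot_or_eq_of_le_beta (hf β) with hβ | hβ
  · rwa [hβ, sup_bot_eq] at hsplit
  · exact absurd (hβ ▸ le_sup_right.trans hsplit.le) h.not_beta_le_gamma

end IsPentagon

section MulSSupHom

variable {Q : Type*} [CompleteLattice Q] (mul : Q → Q → Q)

def mulLeftSSupHom (hsSup_right : ∀ (A : Set Q) (b : Q), mul b (sSup A) = ⨆ a ∈ A, mul b a)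
    (a : Q) : sSupHom Q Q where
  toFun := mul a
  map_sSup' A := by rw [hsSup_right, sSup_image]

def mulRightSSupHom (hsSup_left : ∀ (A : Set Q) (b : Q), mul (sSup A) b = ⨆ a ∈ A, mul a b)
    (b : Q) : sSupHom Q Q where
  toFun x := mul x b
  map_sSup' A := by rw [hsSup_left, sSup_image]

end MulSSupHom

theorem stmt_16_general {Q : Type*} [CompleteLattice Q] (mul : Q → Q → Q)
    (hsSup_left : ∀ (A : Set Q) (b : Q), mul (sSup A) b = ⨆ a ∈ A, mul a b)
    (hsSup_right : ∀ (A : Set Q) (b : Q), mul b (sSup A) = ⨆ a ∈ A, mul b a)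
    (α γ β : Q)
    (hcover : ∀ q : Q, q = ⊥ ∨ q = α ∨ q = γ ∨ q = β ∨ q = ⊤)
    (h2 : α < γ)
    (hβα : ¬ β ≤ α ∧ ¬ α ≤ β) (hβγ : ¬ β ≤ γ ∧ ¬ γ ≤ β)
    (hprop : ∀ a : Q, mul γ a ⊔ mul a γ ≤ a) :
    ((∃ u : Q, ∀ a : Q, mul u a = a ∧ mul a u = a) ↔ mul γ γ = γ) ∧
    (mul γ γ = γ → ∀ a : Q, mul γ a = a ∧ mul a γ = a) := by
  have hP : IsPentagon α γ β := ⟨hcover, h2, hβα.2, hβγ.1, hβγ.2⟩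
  have hleft : ∀ x, mulLeftSSupHom mul hsSup_right γ x ≤ x :=
    fun x => le_sup_left.trans (hprop x)
  have hright : ∀ x, mulRightSSupHom mul hsSup_left γ x ≤ x :=
    fun x => le_sup_right.trans (hprop x)
  have hunit : mul γ γ = γ → ∀ a, mul γ a = a ∧ mul a γ = a := fun hγγ a =>
    ⟨hP.map_eq_self_of_map_gamma _ hleft hγγ a, hP.map_eq_self_of_map_gamma _ hright hγγ a⟩
  refine ⟨⟨?_, fun hγγ => ⟨γ, hunit hγγ⟩⟩, hunit⟩
  rintro ⟨u, hu⟩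
  have hγu : γ ≤ u := (hu γ).2 ▸ le_sup_left.trans (hprop u)
  rcases hP.eq_or_eq_top_of_gamma_le hγu with rfl | rfl
  · exact (hu u).1
  · exact hP.map_gamma_of_map_top _ hleft (hu γ).2

/-- Let `Q` be a quantale on the pentagon `N5` (exactly the five
pairwise distinct elements `⊥, α, γ, β, ⊤` with `⊥ < α < γ < ⊤`, `⊥ < β < ⊤`, and
`β` incomparable with `α` and `γ`) such that `γ * a ⊔ a * γ ≤ a` for all `a`.
Then `Q` has a two-sided unit iff `γ * γ = γ`, in which case `γ` is the unit. -/
theorem stmt_16 {Q : Type*} [CompleteLattice Q] (mul : Q → Q → Q)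
    (hassoc : ∀ a b c : Q, mul (mul a b) c = mul a (mul b c))
    (hsSup_left : ∀ (A : Set Q) (b : Q), mul (sSup A) b = ⨆ a ∈ A, mul a b)
    (hsSup_right : ∀ (A : Set Q) (b : Q), mul b (sSup A) = ⨆ a ∈ A, mul b a)
    (α γ β : Q)
    (hdistinct : ([⊥, α, γ, β, ⊤] : List Q).Pairwise (· ≠ ·))
    (hcover : ∀ q : Q, q = ⊥ ∨ q = α ∨ q = γ ∨ q = β ∨ q = ⊤)
    (h1 : (⊥ : Q) < α) (h2 : α < γ) (h3 : γ < ⊤) (h4 : (⊥ : Q) < β) (h5 : β < ⊤)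
    (hβα : ¬ β ≤ α ∧ ¬ α ≤ β) (hβγ : ¬ β ≤ γ ∧ ¬ γ ≤ β)
    (hprop : ∀ a : Q, mul γ a ⊔ mul a γ ≤ a) :
    ((∃ u : Q, ∀ a : Q, mul u a = a ∧ mul a u = a) ↔ mul γ γ = γ) ∧
    (mul γ γ = γ → ∀ a : Q, mul γ a = a ∧ mul a γ = a) :=
  stmt_16_general mul hsSup_left hsSup_right α γ β hcover h2 hβα hβγ hprop
end
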